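/- arXiv:2108.09057 — 9 statements merged into one kernel-verified Lean document; each statement's English description precedes it below -/
import Mathlib

section
/- For positive integers β and Δ, every graph G with matching number at most β and maximum degree at most Δ satisfies |E(G)| ≤ Δβ + ⌊Δ/2⌋·⌊β/⌈Δ/2⌉⌋, and in particular |E(G)| ≤ Δβ + β. -/
open Classical in
/-- Adjacency matrix of a simple graph over ℝ. -/
noncomputable def adjMat {V : Type*} [Fintype V] (G : SimpleGraph V) : Matrix V V ℝ :=
  Matrix.of fun i j => if G.Adj i j then (1 : ℝ) else 0

/-- Spectral radius: largest adjacency eigenvalue. -/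
noncomputable def specRad {V : Type*} [Fintype V] (G : SimpleGraph V) : ℝ :=
  sSup {t : ℝ | ∃ x : V → ℝ, x ≠ 0 ∧ (adjMat G).mulVec x = t • x}

/-- `G` contains two edge-disjoint cycles. -/
def HasTwoEdgeDisjointCycles {V : Type*} (G : SimpleGraph V) : Prop :=
  ∃ (u v : V) (c₁ : G.Walk u u) (c₂ : G.Walk v v),
    c₁.IsCycle ∧ c₂.IsCycle ∧ ∀ e ∈ c₁.edges, e ∉ c₂.edges

/-- `G` contains two distinct cycles (as subgraphs) of the same length. -/
def HasTwoCyclesSameLength {V : Type*} [DecidableEq V] (G : SimpleGraph V) : Prop :=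
  ∃ (u v : V) (c₁ : G.Walk u u) (c₂ : G.Walk v v),
    c₁.IsCycle ∧ c₂.IsCycle ∧ c₁.length = c₂.length ∧
      c₁.edges.toFinset ≠ c₂.edges.toFinset

/-- The edge set of a triangle given by a triple of vertices. -/
def triEdges {V : Type*} (t : V × V × V) : Set (Sym2 V) :=
  {s(t.1, t.2.1), s(t.2.1, t.2.2), s(t.1, t.2.2)}

/-- `G` contains `k` pairwise edge-disjoint triangles. -/
def HasEdgeDisjointTriangles {V : Type*} (G : SimpleGraph V) (k : ℕ) : Prop :=
  ∃ T : Fin k → V × V × V,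
    (∀ i, G.Adj (T i).1 (T i).2.1 ∧ G.Adj (T i).2.1 (T i).2.2 ∧ G.Adj (T i).1 (T i).2.2) ∧
    ∀ i j, i ≠ j → Disjoint (triEdges (T i)) (triEdges (T j))

/-- The star `K_{1,n-1}` (center `0`) plus an edge between the leaves `1` and `2`. -/
def starPlus (n : ℕ) : SimpleGraph (Fin n) :=
  SimpleGraph.fromRel (fun x y => x.val = 0 ∨ (x.val < 3 ∧ y.val < 3))

/-- `K₄ • K_{1,n-4}`: `K₄` on `{0,1,2,3}` with `0` joined to everything. -/
def K4Star (n : ℕ) : SimpleGraph (Fin n) :=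
  SimpleGraph.fromRel (fun x y => x.val = 0 ∨ (x.val < 4 ∧ y.val < 4))

/-- `K_{3,3} • K_{1,n-6}`: `K_{3,3}` with parts `{0,1,2}`, `{3,4,5}`, and the vertex `0`
identified with the center of a star with leaves `6,…,n-1`. -/
def K33Star (n : ℕ) : SimpleGraph (Fin n) :=
  SimpleGraph.fromRel (fun x y =>
    (x.val < 3 ∧ 3 ≤ y.val ∧ y.val < 6) ∨ (x.val = 0 ∧ 6 ≤ y.val))

/-- `K_{⌈n/2⌉,⌊n/2⌋}` with a star `K_{1,k-1}` (center `0`, leaves `1,…,k-1`) embedded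
in the part `{0,…,⌊n/2⌋-1}` of size `⌊n/2⌋`. -/
def bipStar (n k : ℕ) : SimpleGraph (Fin n) :=
  SimpleGraph.fromRel (fun x y =>
    (x.val < n / 2 ∧ n / 2 ≤ y.val) ∨ (x.val = 0 ∧ 0 < y.val ∧ y.val < k))

/-- `K_{⌈n/2⌉,⌊n/2⌋}` with a triangle `C₃` on `{0,1,2}` embedded in the part of size `⌊n/2⌋`. -/
def bipTri (n : ℕ) : SimpleGraph (Fin n) :=
  SimpleGraph.fromRel (fun x y =>
    (x.val < n / 2 ∧ n / 2 ≤ y.val) ∨ (x.val < 3 ∧ y.val < 3))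

/-- `v` is a cut vertex of `G`. -/
def IsCutVertex {V : Type*} (G : SimpleGraph V) (v : V) : Prop :=
  ∃ a b : ({v}ᶜ : Set V), G.Reachable ↑a ↑b ∧ ¬ (G.induce ({v}ᶜ : Set V)).Reachable a b

/-!
Induct on the number of edges. If some vertex `v` is saturated by every maximum matching, deleting
the edges at `v` loses at most `Δ` edges and lowers the matching number. Otherwise, by Gallai's
lemma, a maximum matching misses at most one vertex of each component, so a component containing
`m` edges of the matching has at most `2m + 1` vertices. Counting degrees it has at most
`Δm + ⌊Δ/2⌋` edges, and when `2m + 1 ≤ Δ` even the complete graph on it has only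
`m(2m + 1) ≤ Δm` edges. Only `⌊ν/⌈Δ/2⌉⌋` components can have `m ≥ ⌈Δ/2⌉ = (Δ + 1) / 2`.
-/
open Finset

namespace SimpleGraph

variable {V : Type*}

def IsEdgeMatching (G : SimpleGraph V) (M : Finset (Sym2 V)) : Prop :=
  ↑M ⊆ G.edgeSet ∧ ∀ e ∈ M, ∀ f ∈ M, e ≠ f → ∀ v : V, ¬(v ∈ e ∧ v ∈ f)

def IsMaximumEdgeMatching (G : SimpleGraph V) (M : Finset (Sym2 V)) : Prop :=
  G.IsEdgeMatching M ∧ ∀ N, G.IsEdgeMatching N → #N ≤ #M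

def Saturates (M : Finset (Sym2 V)) (v : V) : Prop :=
  ∃ e ∈ M, v ∈ e

variable {G H : SimpleGraph V} {M N M' : Finset (Sym2 V)} {e f : Sym2 V} {u v w x : V}

namespace IsEdgeMatching

lemma eq_of_mem (hM : G.IsEdgeMatching M) (he : e ∈ M) (hf : f ∈ M) (hve : v ∈ e)
    (hvf : v ∈ f) : e = f :=
  by_contra fun hef ↦ hM.2 e he f hf hef v ⟨hve, hvf⟩

lemma mono (hM : G.IsEdgeMatching M) (hGH : G ≤ H) : H.IsEdgeMatching M :=
  ⟨hM.1.trans (edgeSet_mono hGH), hM.2⟩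

lemma exists_adj (hM : G.IsEdgeMatching M) (hv : Saturates M v) : ∃ w, G.Adj v w := by
  obtain ⟨e, he, hve⟩ := hv
  obtain ⟨w, rfl⟩ := Sym2.mem_iff_exists.1 hve
  exact ⟨w, hM.1 he⟩

lemma card_partners_le_one [Fintype V] [DecidableEq V] (hM : G.IsEdgeMatching M) (v : V) :
    #{u | s(v, u) ∈ M} ≤ 1 := by
  refine card_le_one.2 fun u hu u' hu' ↦ ?_
  simp only [mem_filter, mem_univ, true_and] at hu hu'
  exact Sym2.congr_right.1 (hM.eq_of_mem hu hu' (Sym2.mem_mk_left v u) (Sym2.mem_mk_left v u'))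

lemma insert [DecidableEq V] (hM : G.IsEdgeMatching M) (hadj : G.Adj u v) (hu : ¬Saturates M u)
    (hv : ¬Saturates M v) : G.IsEdgeMatching (insert s(u, v) M) := by
  refine ⟨?_, ?_⟩
  · rw [coe_insert, Set.insert_subset_iff]
    exact ⟨hadj, hM.1⟩
  · have hnew : ∀ g ∈ M, ∀ x, ¬(x ∈ s(u, v) ∧ x ∈ g) := by
      rintro g hg x ⟨hx, hxg⟩
      rcases Sym2.mem_iff.1 hx with rfl | rfl
      exacts [hu ⟨g, hg, hxg⟩, hv ⟨g, hg, hxg⟩]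
    intro e he f hf hef x hx
    rcases mem_insert.1 he with rfl | he <;> rcases mem_insert.1 hf with rfl | hf
    · exact hef rfl
    · exact hnew f hf x hx
    · exact hnew e he x hx.symm
    · exact hM.2 e he f hf hef x hx

lemma sdiff_union_inter [DecidableEq V] {A B P : Finset (Sym2 V)} (hA : G.IsEdgeMatching A)
    (hB : G.IsEdgeMatching B) (hP : ∀ e ∈ A, ∀ f ∈ P, ∀ v ∈ e, v ∈ f → e ∈ P) :
    G.IsEdgeMatching (A \ P ∪ B ∩ P) := by
  refine ⟨?_, ?_⟩
  · rw [coe_union]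
    exact Set.union_subset (subset_trans (by simp) hA.1) (subset_trans (by simp) hB.1)
  · intro e he f hf hef x hx
    simp only [mem_union, mem_sdiff, mem_inter] at he hf
    rcases he with ⟨heA, heP⟩ | ⟨heB, heP⟩ <;> rcases hf with ⟨hfA, hfP⟩ | ⟨hfB, hfP⟩
    · exact hA.2 e heA f hfA hef x hx
    · exact heP (hP e heA f hfP x hx.1 hx.2)
    · exact hfP (hP f hfA e heP x hx.2 hx.1)
    · exact hB.2 e heB f hfB hef x hx

end IsEdgeMatching

lemma card_partners_eq_zero [Fintype V] [DecidableEq V] (hx : ¬Saturates M x) :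
    #{y | s(x, y) ∈ M} = 0 :=
  card_eq_zero.2 (filter_eq_empty_iff.2 fun y _ h ↦ hx ⟨_, h, Sym2.mem_mk_left x y⟩)

lemma card_sdiff_union_inter [DecidableEq V] (A B P : Finset (Sym2 V)) :
    #(A \ P ∪ B ∩ P) = #(A \ P) + #(B ∩ P) :=
  card_union_of_disjoint (Finset.disjoint_left.2 fun _ h h' ↦ (mem_sdiff.1 h).2 (mem_inter.1 h').2)

lemma exists_isMaximumEdgeMatching [Fintype V] (G : SimpleGraph V) :
    ∃ M, G.IsMaximumEdgeMatching M := by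
  classical
  obtain ⟨M, hM, hmax⟩ := exists_max_image {M : Finset (Sym2 V) | G.IsEdgeMatching M} card
    ⟨∅, by simp [IsEdgeMatching]⟩
  exact ⟨M, (mem_filter.1 hM).2, fun N hN ↦ hmax N (mem_filter.2 ⟨mem_univ N, hN⟩)⟩

namespace IsMaximumEdgeMatching

lemma not_adj [DecidableEq V] (hM : G.IsMaximumEdgeMatching M) (hu : ¬Saturates M u)
    (hv : ¬Saturates M v) : ¬G.Adj u v := fun hadj ↦ by
  have hnot : s(u, v) ∉ M := fun h ↦ hu ⟨_, h, Sym2.mem_mk_left u v⟩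
  have := hM.2 _ (hM.1.insert hadj hu hv)
  rw [card_insert_of_notMem hnot] at this
  omega

lemma sdiff_union_inter [DecidableEq V] (hM : G.IsMaximumEdgeMatching M)
    (hN : G.IsMaximumEdgeMatching N) {P : Finset (Sym2 V)}
    (hPM : ∀ e ∈ M, ∀ f ∈ P, ∀ v ∈ e, v ∈ f → e ∈ P)
    (hPN : ∀ e ∈ N, ∀ f ∈ P, ∀ v ∈ e, v ∈ f → e ∈ P) :
    G.IsMaximumEdgeMatching (M \ P ∪ N ∩ P) := by
  -- the two exchanges together have `#M + #N` edges, and neither has more than `#M = #N`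
  have hMN := hM.2 N hN.1
  have hNM := hN.2 M hM.1
  have hswap := hM.2 _ (hN.1.sdiff_union_inter hM.1 hPN)
  have hM' := card_sdiff_add_card_inter M P
  have hN' := card_sdiff_add_card_inter N P
  refine ⟨hM.1.sdiff_union_inter hN.1 hPM, fun L hL ↦ (hM.2 L hL).trans ?_⟩
  rw [card_sdiff_union_inter] at hswap ⊢
  omega

lemma card_lt_of_deleteIncidenceSet (hM : G.IsMaximumEdgeMatching M)
    (hv : ∀ N, G.IsMaximumEdgeMatching N → Saturates N v)
    (hM' : (G.deleteIncidenceSet v).IsEdgeMatching M') : #M' < #M := by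
  have hM'G := hM'.mono (G.deleteIncidenceSet_le v)
  refine (hM.2 M' hM'G).lt_of_ne fun h ↦ ?_
  obtain ⟨e, he, hve⟩ := hv M' ⟨hM'G, fun N hN ↦ h ▸ hM.2 N hN⟩
  have he' := hM'.1 he
  rw [edgeSet_deleteIncidenceSet] at he'
  exact he'.2 ⟨he'.1, hve⟩

end IsMaximumEdgeMatching

section Components

lemma ConnectedComponent.mem_of_mem_edge {C : H.ConnectedComponent} (he : e ∈ H.edgeSet)
    (hve : v ∈ e) (hv : v ∈ C) (hxe : x ∈ e) : x ∈ C := by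
  induction e using Sym2.ind with
  | _ a b =>
    have hab : H.Adj a b := he
    rcases Sym2.mem_iff.1 hve with rfl | rfl <;> rcases Sym2.mem_iff.1 hxe with rfl | rfl
    exacts [hv, C.mem_supp_of_adj_mem_supp hv hab, C.mem_supp_of_adj_mem_supp hv hab.symm, hv]

open Classical in
noncomputable def ConnectedComponent.edgesWithin (C : H.ConnectedComponent)
    (S : Finset (Sym2 V)) : Finset (Sym2 V) :=
  {e ∈ S | ∀ x ∈ e, x ∈ C}

lemma ConnectedComponent.mem_edgesWithin {C : H.ConnectedComponent} {S : Finset (Sym2 V)} :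
    e ∈ C.edgesWithin S ↔ e ∈ S ∧ ∀ x ∈ e, x ∈ C := by
  classical
  simp [edgesWithin]

lemma ConnectedComponent.mem_edgesWithin_of_mem {C : H.ConnectedComponent} {S : Finset (Sym2 V)}
    (heS : e ∈ S) (he : e ∈ H.edgeSet) (hve : v ∈ e) (hv : v ∈ C) : e ∈ C.edgesWithin S :=
  mem_edgesWithin.2 ⟨heS, fun _ hx ↦ mem_of_mem_edge he hve hv hx⟩

variable [Fintype V] [DecidableRel H.Adj]

noncomputable instance (C : H.ConnectedComponent) : DecidablePred (· ∈ C) :=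
  Classical.decPred _

instance (C : H.ConnectedComponent) : DecidableRel C.toSimpleGraph.Adj :=
  fun x y ↦ inferInstanceAs (Decidable (H.Adj x y))

lemma ConnectedComponent.degree_toSimpleGraph (C : H.ConnectedComponent) (x : C) :
    C.toSimpleGraph.degree x = H.degree x := by
  classical
  convert degree_induce_of_neighborSet_subset fun _ hy ↦ C.mem_supp_of_adj_mem_supp x.2 hy
    using 2 <;> rfl

lemma ConnectedComponent.sum_degree (C : H.ConnectedComponent) :
    ∑ x : C, H.degree x = 2 * #C.toSimpleGraph.edgeFinset := by
  simp_rw [← C.degree_toSimpleGraph]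
  exact C.toSimpleGraph.sum_degrees_eq_twice_card_edges

lemma sum_card_edgeFinset_toSimpleGraph [DecidableEq V] :
    ∑ C : H.ConnectedComponent, #C.toSimpleGraph.edgeFinset = #H.edgeFinset := by
  suffices 2 * ∑ C : H.ConnectedComponent, #C.toSimpleGraph.edgeFinset = 2 * #H.edgeFinset by
    omega
  let := Classical.decEq H.ConnectedComponent
  rw [mul_sum, ← H.sum_degrees_eq_twice_card_edges, ← sum_fiberwise univ H.connectedComponentMk]
  refine sum_congr rfl fun C _ ↦ ?_
  rw [← C.sum_degree]
  refine (sum_subtype (p := (· ∈ C)) _ (fun v ↦ ?_) (H.degree ·)).symm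
  rw [mem_filter, ← ConnectedComponent.mem_supp_iff]
  exact and_iff_right (mem_univ v)

/-- Connectivity gives at least `|C| - 1` edges, and with all degrees at most two the degree sum
`2|E|` then leaves room for at most two vertices of degree at most one. -/
lemma ConnectedComponent.card_degree_le_one_le_two (hdeg : ∀ v, H.degree v ≤ 2)
    (C : H.ConnectedComponent) : #{x : C | H.degree x ≤ 1} ≤ 2 := by
  have hconn := C.connected_toSimpleGraph.card_vert_le_card_edgeSet_add_one
  rw [Nat.card_eq_fintype_card, Nat.card_eq_fintype_card, ← edgeFinset_card] at hconn
  have hsum : ∑ x : C, (H.degree x + if H.degree x ≤ 1 then 1 else 0) ≤ ∑ _x : C, 2 :=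
    sum_le_sum fun x _ ↦ by have := hdeg x; split_ifs <;> omega
  rw [sum_add_distrib, C.sum_degree, sum_boole, sum_const, card_univ] at hsum
  simp only [Nat.cast_id, smul_eq_mul] at hsum
  omega

lemma sum_card_edgesWithin_le [DecidableEq V] (S : Finset (Sym2 V)) :
    ∑ C : H.ConnectedComponent, #(C.edgesWithin S) ≤ #S := by
  classical
  rw [← card_biUnion]
  · exact card_le_card (biUnion_subset.2 fun C _ _ he ↦ (ConnectedComponent.mem_edgesWithin.1 he).1)
  · intro C _ D _ hCD
    refine Finset.disjoint_left.2 fun e heC heD ↦ hCD ?_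
    induction e using Sym2.ind with
    | _ a b =>
      rw [← (ConnectedComponent.mem_edgesWithin.1 heC).2 a (Sym2.mem_mk_left a b),
        (ConnectedComponent.mem_edgesWithin.1 heD).2 a (Sym2.mem_mk_left a b)]

end Components

section Gallai

variable [DecidableEq V]

abbrev symmDiffGraph (M N : Finset (Sym2 V)) : SimpleGraph V :=
  fromEdgeSet ↑(symmDiff M N)

lemma mem_edgeSet_symmDiffGraph (hM : G.IsEdgeMatching M) (hN : G.IsEdgeMatching N)
    (he : e ∈ symmDiff M N) : e ∈ (symmDiffGraph M N).edgeSet := by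
  rw [edgeSet_fromEdgeSet, Set.mem_sdiff, Sym2.mem_diagSet]
  refine ⟨he, G.not_isDiag_of_mem_edgeSet ?_⟩
  rcases mem_symmDiff.1 he with h | h
  exacts [hM.1 h.1, hN.1 h.1]

lemma IsEdgeMatching.mem_edgesWithin_symmDiff (hM : G.IsEdgeMatching M) (hN : G.IsEdgeMatching N)
    {C : (symmDiffGraph M N).ConnectedComponent} (he : e ∈ M ∪ N)
    (hf : f ∈ C.edgesWithin (symmDiff M N)) (hve : v ∈ e) (hvf : v ∈ f) :
    e ∈ C.edgesWithin (symmDiff M N) := by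
  rw [ConnectedComponent.mem_edgesWithin] at hf
  have heMN : e ∈ symmDiff M N := by
    by_contra h
    have ⟨heM, heN⟩ : e ∈ M ∧ e ∈ N := by simp only [mem_symmDiff, mem_union] at h he; tauto
    rcases mem_symmDiff.1 hf.1 with hf' | hf'
    · exact hf'.2 (hM.eq_of_mem heM hf'.1 hve hvf ▸ heN)
    · exact hf'.2 (hN.eq_of_mem heN hf'.1 hve hvf ▸ heM)
  exact ConnectedComponent.mem_edgesWithin_of_mem heMN (mem_edgeSet_symmDiffGraph hM hN heMN) hve
    (hf.2 v hvf)

variable [Fintype V]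

lemma degree_symmDiffGraph_le (x : V) :
    (symmDiffGraph M N).degree x ≤ #{y | s(x, y) ∈ M} + #{y | s(x, y) ∈ N} := by
  rw [← card_neighborFinset_eq_degree]
  refine (card_le_card fun y hy ↦ ?_).trans (card_union_le _ _)
  rw [mem_neighborFinset, fromEdgeSet_adj, mem_coe, mem_symmDiff] at hy
  simp only [mem_union, mem_filter, mem_univ, true_and]
  tauto

lemma IsEdgeMatching.degree_symmDiffGraph_le_two (hM : G.IsEdgeMatching M)
    (hN : G.IsEdgeMatching N) (x : V) : (symmDiffGraph M N).degree x ≤ 2 :=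
  (degree_symmDiffGraph_le x).trans
    (Nat.add_le_add (hM.card_partners_le_one x) (hN.card_partners_le_one x))

lemma IsEdgeMatching.degree_symmDiffGraph_le_one (hM : G.IsEdgeMatching M)
    (hN : G.IsEdgeMatching N) (hx : ¬Saturates M x ∨ ¬Saturates N x) :
    (symmDiffGraph M N).degree x ≤ 1 := by
  have hdeg := degree_symmDiffGraph_le (M := M) (N := N) x
  have hM₁ := hM.card_partners_le_one x
  have hN₁ := hN.card_partners_le_one x
  rcases hx with hx | hx <;> rw [card_partners_eq_zero hx] at hdeg <;> omega

/-- Exchange `M` and `N` on the component of `w` in `M ∆ N`. There `w`, and every vertex that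
becomes saturated, has degree at most one, and the component has at most two such vertices. -/
theorem IsMaximumEdgeMatching.exists_not_saturates (hM : G.IsMaximumEdgeMatching M)
    (hN : G.IsMaximumEdgeMatching N) (hw : Saturates M w) (hwN : ¬Saturates N w)
    (hu : ¬Saturates M u) (hv : ¬Saturates M v) (huv : u ≠ v) :
    ∃ M', G.IsMaximumEdgeMatching M' ∧ ¬Saturates M' w ∧ (¬Saturates M' u ∨ ¬Saturates M' v) := by
  set C := (symmDiffGraph M N).connectedComponentMk w
  set P := C.edgesWithin (symmDiff M N)
  have hPM : ∀ e ∈ M, ∀ f ∈ P, ∀ x ∈ e, x ∈ f → e ∈ P := fun e he _ hf _ hx hxf ↦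
    hM.1.mem_edgesWithin_symmDiff hN.1 (mem_union_left N he) hf hx hxf
  have hPN : ∀ e ∈ N, ∀ f ∈ P, ∀ x ∈ e, x ∈ f → e ∈ P := fun e he _ hf _ hx hxf ↦
    hM.1.mem_edgesWithin_symmDiff hN.1 (mem_union_right M he) hf hx hxf
  have hwC : w ∈ C := ConnectedComponent.connectedComponentMk_mem
  have hmem : ∀ x, Saturates (M \ P ∪ N ∩ P) x → ¬Saturates M x → x ∈ C := by
    rintro x ⟨e, he, hxe⟩ hx
    rcases mem_union.1 he with h | h
    · exact absurd ⟨e, (mem_sdiff.1 h).1, hxe⟩ hx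
    · exact (ConnectedComponent.mem_edgesWithin.1 (mem_inter.1 h).2).2 x hxe
  refine ⟨_, hM.sdiff_union_inter hN hPM hPN, ?_, ?_⟩
  · rintro ⟨e, he, hwe⟩
    rcases mem_union.1 he with h | h
    · have heMN : e ∈ symmDiff M N :=
        mem_symmDiff.2 (Or.inl ⟨(mem_sdiff.1 h).1, fun heN ↦ hwN ⟨e, heN, hwe⟩⟩)
      exact (mem_sdiff.1 h).2 (ConnectedComponent.mem_edgesWithin_of_mem heMN
        (mem_edgeSet_symmDiffGraph hM.1 hN.1 heMN) hwe hwC)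
    · exact hwN ⟨e, (mem_inter.1 h).1, hwe⟩
  · by_contra! h
    have huC := hmem u h.1 hu
    have hvC := hmem v h.2 hv
    have hwu : w ≠ u := fun h ↦ hu (h ▸ hw)
    have hwv : w ≠ v := fun h ↦ hv (h ▸ hw)
    have hthree : 3 ≤ #{x : C | (symmDiffGraph M N).degree x ≤ 1} := by
      refine le_of_eq_of_le ?_ (card_le_card (s := {⟨u, huC⟩, ⟨v, hvC⟩, ⟨w, hwC⟩}) ?_)
      · refine (card_eq_three.2 ⟨_, _, _, ?_, ?_, ?_, rfl⟩).symm <;> simp [huv, hwu.symm, hwv.symm]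
      · intro x hx
        simp only [mem_insert, mem_singleton] at hx
        rw [mem_filter]
        rcases hx with rfl | rfl | rfl
        exacts [⟨mem_univ _, hM.1.degree_symmDiffGraph_le_one hN.1 (Or.inl hu)⟩,
          ⟨mem_univ _, hM.1.degree_symmDiffGraph_le_one hN.1 (Or.inl hv)⟩,
          ⟨mem_univ _, hM.1.degree_symmDiffGraph_le_one hN.1 (Or.inr hwN)⟩]
    have := C.card_degree_le_one_le_two (hM.1.degree_symmDiffGraph_le_two hN.1)
    omega

/-- Gallai's lemma. If `u ≠ v` are missed, the neighbour `w` of `u` on a shortest path to `v` is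
saturated, and exchanging with a maximum matching missing `w` yields one that misses `w` and
also `u` or `v`, a closer pair. -/
theorem IsMaximumEdgeMatching.eq_of_reachable
    (hall : ∀ x, ∃ N, G.IsMaximumEdgeMatching N ∧ ¬Saturates N x)
    (hM : G.IsMaximumEdgeMatching M) (hu : ¬Saturates M u) (hv : ¬Saturates M v)
    (huv : G.Reachable u v) : u = v := by
  induction hd : G.dist u v using Nat.strong_induction_on generalizing M u v with
  | _ d ih =>
  obtain ⟨p, hp⟩ := huv.exists_walk_length_eq_dist
  cases p with
  | nil => rfl
  | @cons _ w _ hadj q =>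
    by_contra huv'
    have hw : Saturates M w := by_contra fun hw ↦ hM.not_adj hu hw hadj
    obtain ⟨N, hN, hwN⟩ := hall w
    obtain ⟨M', hM', hw', hu' | hv'⟩ := hM.exists_not_saturates hN hw hwN hu hv huv'
    · exact hM'.not_adj hu' hw' hadj
    · have hwv : G.dist w v < d := by
        have := dist_le q
        rw [Walk.length_cons] at hp
        omega
      obtain rfl := ih _ hwv hM' hw' hv' q.reachable rfl
      exact hM.not_adj hu hv hadj

end Gallai

section EdgeBound

variable [Fintype V] [DecidableEq V]

lemma card_edgeFinset_le_of_card_le {W : Type*} [Fintype W] (K : SimpleGraph W)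
    [DecidableRel K.Adj] {Δ m : ℕ} (hdeg : ∀ v, K.degree v ≤ Δ)
    (hcard : Fintype.card W ≤ 2 * m + 1) :
    #K.edgeFinset ≤ Δ * m + if (Δ + 1) / 2 ≤ m then Δ / 2 else 0 := by
  split_ifs with hm
  · have hsum : ∑ v, K.degree v ≤ ∑ _v : W, Δ := sum_le_sum fun v _ ↦ hdeg v
    rw [K.sum_degrees_eq_twice_card_edges, sum_const, card_univ, smul_eq_mul] at hsum
    have : Fintype.card W * Δ ≤ (2 * m + 1) * Δ := Nat.mul_le_mul_right Δ hcard
    have : (2 * m + 1) * Δ = 2 * (Δ * m) + Δ := by ring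
    omega
  · calc #K.edgeFinset ≤ (Fintype.card W).choose 2 := K.card_edgeFinset_le_card_choose_two
      _ ≤ (2 * m + 1).choose 2 := Nat.choose_le_choose 2 hcard
      _ = m * (2 * m + 1) := by
        rw [Nat.choose_two_right, Nat.add_sub_cancel, mul_comm, mul_assoc,
          Nat.mul_div_cancel_left _ two_pos]
      _ ≤ m * Δ := Nat.mul_le_mul_left m (by omega)
      _ = Δ * m + 0 := by ring

lemma IsEdgeMatching.card_le_two_mul_card_edgesWithin_add_one (hM : G.IsEdgeMatching M)
    (C : G.ConnectedComponent)
    (hC : ∀ u ∈ C, ∀ v ∈ C, ¬Saturates M u → ¬Saturates M v → u = v) :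
    Fintype.card C ≤ 2 * #(C.edgesWithin M) + 1 := by
  classical
  have hcover : ({x | x ∈ C} : Finset V) ⊆
      (C.edgesWithin M).biUnion Sym2.toFinset ∪ ({x | x ∈ C ∧ ¬Saturates M x} : Finset V) := by
    intro x hx
    rw [mem_filter] at hx
    by_cases hxM : Saturates M x
    · obtain ⟨e, he, hxe⟩ := hxM
      exact mem_union_left _ (mem_biUnion.2 ⟨e,
        ConnectedComponent.mem_edgesWithin_of_mem he (hM.1 he) hxe hx.2, Sym2.mem_toFinset.2 hxe⟩)
    · exact mem_union_right _ (mem_filter.2 ⟨mem_univ x, hx.2, hxM⟩)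
  have hends : #((C.edgesWithin M).biUnion Sym2.toFinset) ≤ #(C.edgesWithin M) * 2 :=
    card_biUnion_le_card_mul _ _ 2 fun e _ ↦ by rw [Sym2.card_toFinset]; split_ifs <;> omega
  have hmissed : #({x | x ∈ C ∧ ¬Saturates M x} : Finset V) ≤ 1 := card_le_one.2 fun u hu v hv ↦ by
    simp only [mem_filter, mem_univ, true_and] at hu hv
    exact hC u hu.1 v hv.1 hu.2 hv.2
  rw [Fintype.card_subtype]
  have := (card_le_card hcover).trans (card_union_le _ _)
  omega

variable [DecidableRel G.Adj]

theorem IsMaximumEdgeMatching.card_edgeFinset_le_of_forall_exists {Δ : ℕ}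
    (hdeg : ∀ v, G.degree v ≤ Δ) (hall : ∀ x, ∃ N, G.IsMaximumEdgeMatching N ∧ ¬Saturates N x)
    (hM : G.IsMaximumEdgeMatching M) :
    #G.edgeFinset ≤ Δ * #M + Δ / 2 * (#M / ((Δ + 1) / 2)) := by
  set c := (Δ + 1) / 2
  set m : G.ConnectedComponent → ℕ := fun C ↦ #(C.edgesWithin M)
  have hcomp (C : G.ConnectedComponent) :
      #C.toSimpleGraph.edgeFinset ≤ Δ * m C + if c ≤ m C then Δ / 2 else 0 :=
    card_edgeFinset_le_of_card_le _ (fun x ↦ (C.degree_toSimpleGraph x).trans_le (hdeg x))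
      (hM.1.card_le_two_mul_card_edgesWithin_add_one C fun u hu v hv hu' hv' ↦
        hM.eq_of_reachable hall hu' hv' (C.reachable_of_mem_supp hu hv))
  have hm : ∑ C, m C ≤ #M := sum_card_edgesWithin_le M
  have hlarge : Δ / 2 * #{C | c ≤ m C} ≤ Δ / 2 * (#M / c) := by
    rcases Nat.eq_zero_or_pos (Δ / 2) with h | h
    · simp [h]
    refine Nat.mul_le_mul_left _ ((Nat.le_div_iff_mul_le (by omega)).2 ?_)
    calc #{C | c ≤ m C} * c ≤ ∑ C ∈ {C | c ≤ m C}, m C := by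
          simpa using card_nsmul_le_sum _ m c fun C hC ↦ (mem_filter.1 hC).2
      _ ≤ ∑ C, m C := sum_le_sum_of_subset (filter_subset _ _)
      _ ≤ #M := hm
  calc #G.edgeFinset = ∑ C : G.ConnectedComponent, #C.toSimpleGraph.edgeFinset :=
        sum_card_edgeFinset_toSimpleGraph.symm
    _ ≤ ∑ C, (Δ * m C + if c ≤ m C then Δ / 2 else 0) := sum_le_sum fun C _ ↦ hcomp C
    _ = Δ * ∑ C, m C + Δ / 2 * #{C | c ≤ m C} := by
        rw [sum_add_distrib, ← mul_sum, sum_ite, sum_const_zero, sum_const, smul_eq_mul,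
          add_zero, mul_comm (#_)]
    _ ≤ Δ * #M + Δ / 2 * (#M / c) := Nat.add_le_add (Nat.mul_le_mul_left Δ hm) hlarge

theorem IsMaximumEdgeMatching.card_edgeFinset_le {Δ : ℕ} (hdeg : ∀ v, G.degree v ≤ Δ)
    (hM : G.IsMaximumEdgeMatching M) :
    #G.edgeFinset ≤ Δ * #M + Δ / 2 * (#M / ((Δ + 1) / 2)) := by
  induction hn : #G.edgeFinset using Nat.strong_induction_on generalizing G M with
  | _ n ih =>
  by_cases hall : ∀ x, ∃ N, G.IsMaximumEdgeMatching N ∧ ¬Saturates N x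
  · exact hn ▸ hM.card_edgeFinset_le_of_forall_exists hdeg hall
  push Not at hall
  obtain ⟨v, hv⟩ := hall
  obtain ⟨M', hM'⟩ := (G.deleteIncidenceSet v).exists_isMaximumEdgeMatching
  have hlt : #M' < #M := hM.card_lt_of_deleteIncidenceSet hv hM'.1
  have hdv : 0 < G.degree v := (G.degree_pos_iff_exists_adj v).2 (hM.1.exists_adj (hv M hM))
  have hE := G.card_edgeFinset_deleteIncidenceSet v
  have hvn := G.degree_le_card_edgeFinset v
  have hIH := ih _ (by omega) (fun x ↦ (degree_le_of_le (G.deleteIncidenceSet_le v)).trans (hdeg x))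
    hM' rfl
  have h₁ : Δ * #M' + Δ ≤ Δ * #M := by rw [← mul_add_one]; exact Nat.mul_le_mul_left Δ hlt
  have h₂ : Δ / 2 * (#M' / ((Δ + 1) / 2)) ≤ Δ / 2 * (#M / ((Δ + 1) / 2)) :=
    Nat.mul_le_mul_left _ (Nat.div_le_div_right hlt.le)
  have := hdeg v
  omega

end EdgeBound

end SimpleGraph

theorem stmt1_general {V : Type*} [Fintype V] [DecidableEq V] (G : SimpleGraph V)
    [DecidableRel G.Adj] (β Δ : ℕ)
    (hmatch : ∀ M : Finset (Sym2 V), ↑M ⊆ G.edgeSet →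
      (∀ e ∈ M, ∀ f ∈ M, e ≠ f → ∀ v : V, ¬(v ∈ e ∧ v ∈ f)) → M.card ≤ β)
    (hdeg : ∀ v : V, G.degree v ≤ Δ) :
    G.edgeFinset.card ≤ Δ * β + (Δ / 2) * (β / ((Δ + 1) / 2)) ∧
      G.edgeFinset.card ≤ Δ * β + β := by
  obtain ⟨M, hM⟩ := G.exists_isMaximumEdgeMatching
  have hMβ : #M ≤ β := hmatch M hM.1.1 hM.1.2
  have hbound : #G.edgeFinset ≤ Δ * β + Δ / 2 * (β / ((Δ + 1) / 2)) :=
    (hM.card_edgeFinset_le hdeg).trans (by gcongr)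
  have hextra : Δ / 2 * (β / ((Δ + 1) / 2)) ≤ β :=
    (Nat.mul_le_mul_right _ (by omega)).trans (Nat.mul_div_le β _)
  exact ⟨hbound, hbound.trans (by omega)⟩

theorem stmt1 {V : Type*} [Fintype V] [DecidableEq V] (G : SimpleGraph V)
    [DecidableRel G.Adj] (β Δ : ℕ) (hβ : 1 ≤ β) (hΔ : 1 ≤ Δ)
    (hmatch : ∀ M : Finset (Sym2 V), ↑M ⊆ G.edgeSet →
      (∀ e ∈ M, ∀ f ∈ M, e ≠ f → ∀ v : V, ¬(v ∈ e ∧ v ∈ f)) → M.card ≤ β)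
    (hdeg : ∀ v : V, G.degree v ≤ Δ) :
    G.edgeFinset.card ≤ Δ * β + (Δ / 2) * (β / ((Δ + 1) / 2)) ∧
      G.edgeFinset.card ≤ Δ * β + β :=
  stmt1_general G β Δ hmatch hdeg
end

section
/- Let G be a graph with spectral radius ρ(G) and t triangles. Then e(G) ≥ ρ(G)² − 3t/ρ(G). -/
/-! Let `λᵢ` be the adjacency eigenvalues, `ρ = max λᵢ`, `m = e(G)`. Then `∑ λᵢ² = tr A² = 2m` and
`∑ λᵢ³ = tr A³ ≤ 6t`, while `|λᵢ| ≤ ρ` because `A` is entrywise nonnegative. Hence every term of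
`∑ λᵢ² (λᵢ + ρ) = ∑ λᵢ³ + 2mρ` is nonnegative and the one at `λᵢ = ρ` is `2ρ³`, so
`2ρ³ ≤ 6t + 2mρ`; dividing by `2ρ` gives the claim. -/

open Finset Matrix

theorem Finset.two_mul_pow_three_le_sum_pow_three_add {ι R : Type*} [Fintype ι] [CommRing R]
    [LinearOrder R] [IsStrictOrderedRing R] {f : ι → R} {c : R} {i₀ : ι} (hi₀ : f i₀ = c)
    (hf : ∀ i, -c ≤ f i) : 2 * c ^ 3 ≤ ∑ i, f i ^ 3 + c * ∑ i, f i ^ 2 :=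
  calc 2 * c ^ 3 = f i₀ ^ 2 * (f i₀ + c) := by rw [hi₀]; ring
    _ ≤ ∑ i, f i ^ 2 * (f i + c) :=
      single_le_sum (f := fun i => f i ^ 2 * (f i + c))
        (fun i _ => mul_nonneg (sq_nonneg _) (neg_le_iff_add_nonneg.mp (hf i))) (mem_univ i₀)
    _ = ∑ i, f i ^ 3 + c * ∑ i, f i ^ 2 := by
      rw [mul_sum, ← sum_add_distrib]
      exact sum_congr rfl fun i _ => by ring

namespace Matrix

variable {n : Type*} [Fintype n]

theorem abs_dotProduct_mulVec_le {A : Matrix n n ℝ} (hA : ∀ i j, 0 ≤ A i j) (x y : n → ℝ) :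
    |x ⬝ᵥ A *ᵥ y| ≤ |x| ⬝ᵥ A *ᵥ |y| := by
  simp only [dotProduct, mulVec, mul_sum]
  refine (abs_sum_le_sum_abs _ _).trans (sum_le_sum fun i _ => ?_)
  refine (abs_sum_le_sum_abs _ _).trans_eq (sum_congr rfl fun j _ => ?_)
  simp [abs_mul, abs_of_nonneg (hA i j)]

theorem abs_dotProduct_abs (x : n → ℝ) : |x| ⬝ᵥ |x| = x ⬝ᵥ x := by
  simp [dotProduct]

namespace IsHermitian

variable [DecidableEq n]

theorem trace_pow {𝕜 : Type*} [RCLike 𝕜] {A : Matrix n n 𝕜} (hA : A.IsHermitian) (k : ℕ) :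
    (A ^ k).trace = ∑ i, (hA.eigenvalues i : 𝕜) ^ k := by
  conv_lhs => rw [hA.spectral_theorem, ← map_pow, Unitary.conjStarAlgAut_apply, trace_mul_cycle,
    Unitary.coe_star_mul_self, one_mul, diagonal_pow, trace_diagonal]
  simp

variable {A : Matrix n n ℝ} (hA : A.IsHermitian)
include hA

theorem setOf_exists_mulVec_eq_smul_eq_range :
    {t : ℝ | ∃ x : n → ℝ, x ≠ 0 ∧ A *ᵥ x = t • x} = Set.range hA.eigenvalues := by
  ext t
  rw [← hA.spectrum_real_eq_range_eigenvalues, ← spectrum_toLin',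
    ← Module.End.hasEigenvalue_iff_mem_spectrum]
  constructor
  · rintro ⟨x, hx, hAx⟩
    exact Module.End.hasEigenvalue_of_hasEigenvector ⟨by simpa using hAx, hx⟩
  · intro h
    obtain ⟨x, hx, hx0⟩ := h.exists_hasEigenvector
    exact ⟨x, hx0, by simpa using hx⟩

open scoped MatrixOrder in
theorem dotProduct_mulVec_le {c : ℝ} (hc : ∀ i, hA.eigenvalues i ≤ c) (x : n → ℝ) :
    x ⬝ᵥ A *ᵥ x ≤ c * (x ⬝ᵥ x) := by
  have hAc : A ≤ algebraMap ℝ _ c := le_algebraMap_of_spectrum_le (fun t ht => by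
    rw [hA.spectrum_real_eq_range_eigenvalues] at ht
    obtain ⟨i, rfl⟩ := ht
    exact hc i) hA
  simpa [sub_mulVec, Algebra.algebraMap_eq_smul_one, dotProduct_sub, smul_mulVec] using
    (le_iff.mp hAc).dotProduct_mulVec_nonneg x

theorem neg_le_eigenvalues_of_nonneg (hA₀ : ∀ i j, 0 ≤ A i j) {c : ℝ} (hc : ∀ i, hA.eigenvalues i ≤ c)
    (i : n) : -c ≤ hA.eigenvalues i := by
  set x : n → ℝ := ⇑(hA.eigenvectorBasis i)
  have hx : x ⬝ᵥ x = 1 := by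
    have h := real_inner_self_eq_norm_sq (hA.eigenvectorBasis i)
    rw [hA.eigenvectorBasis.orthonormal.1 i, EuclideanSpace.inner_eq_star_dotProduct] at h
    simpa using h
  -- Perron–Frobenius: passing to `|x|` can only increase the quadratic form of a nonnegative matrix.
  calc -c = -(c * (|x| ⬝ᵥ |x|)) := by rw [abs_dotProduct_abs, hx, mul_one]
    _ ≤ -(|x| ⬝ᵥ A *ᵥ |x|) := neg_le_neg (hA.dotProduct_mulVec_le hc |x|)
    _ ≤ x ⬝ᵥ A *ᵥ x := neg_le_of_abs_le (abs_dotProduct_mulVec_le hA₀ x x)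
    _ = hA.eigenvalues i := by
      rw [hA.mulVec_eigenvectorBasis, dotProduct_smul, hx, smul_eq_mul, mul_one]

end IsHermitian

end Matrix

namespace SimpleGraph

variable {V : Type*} (G : SimpleGraph V) [DecidableRel G.Adj]

theorem adjMatrix_nonneg {α : Type*} [Semiring α] [PartialOrder α] [IsOrderedRing α] (i j : V) :
    0 ≤ G.adjMatrix α i j := by
  rw [adjMatrix_apply]
  split_ifs <;> simp

variable [Fintype V]

def orderedTriangleFinset : Finset (V × V × V) :=
  {p | G.Adj p.1 p.2.1 ∧ G.Adj p.2.1 p.2.2 ∧ G.Adj p.2.2 p.1}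

@[simp]
theorem mem_orderedTriangleFinset {p : V × V × V} :
    p ∈ G.orderedTriangleFinset ↔ G.Adj p.1 p.2.1 ∧ G.Adj p.2.1 p.2.2 ∧ G.Adj p.2.2 p.1 := by
  simp [orderedTriangleFinset]

theorem adjMat_eq_adjMatrix : adjMat G = G.adjMatrix ℝ := by
  ext i j
  simp [adjMat, adjMatrix_apply]

variable [DecidableEq V]

theorem trace_adjMatrix_sq {α : Type*} [Semiring α] :
    (G.adjMatrix α ^ 2).trace = 2 * #G.edgeFinset := by
  simp only [sq, trace, diag_apply, adjMatrix_mul_self_apply_self]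
  exact_mod_cast congrArg Nat.cast G.sum_degrees_eq_twice_card_edges

theorem trace_adjMatrix_pow_three {α : Type*} [Semiring α] :
    (G.adjMatrix α ^ 3).trace = #G.orderedTriangleFinset := by
  rw [orderedTriangleFinset, card_filter, Nat.cast_sum, ← univ_product_univ, sum_product,
    ← univ_product_univ]
  simp only [pow_three, trace, diag_apply, mul_apply, sum_product, mul_sum]
  refine sum_congr rfl fun a _ => sum_congr rfl fun b _ => sum_congr rfl fun c _ => ?_
  by_cases hab : G.Adj a b <;> by_cases hbc : G.Adj b c <;> by_cases hca : G.Adj c a <;>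
    simp [*]

theorem card_orderedTriangleFinset_le : #G.orderedTriangleFinset ≤ 6 * #(G.cliqueFinset 3) := by
  refine card_le_mul_card_image_of_maps_to (f := fun p => {p.1, p.2.1, p.2.2}) ?_ _ ?_
  · rintro ⟨a, b, c⟩ h
    rw [mem_orderedTriangleFinset] at h
    simpa [is3Clique_triple_iff] using ⟨h.1, h.2.2.symm, h.2.1⟩
  · -- an ordered triangle is determined by its vertex set and its first two vertices
    intro s hs
    calc _ ≤ #s.offDiag := card_le_card_of_injOn (fun p => (p.1, p.2.1)) ?_ ?_
      _ = 6 := by simp [offDiag_card, (mem_cliqueFinset_iff.mp hs).card_eq]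
    · intro p h
      obtain ⟨a, b, c⟩ := p
      simp only [coe_filter, mem_orderedTriangleFinset, Set.mem_ofPred_eq] at h
      obtain ⟨⟨hab, -, -⟩, rfl⟩ := h
      simp [hab.ne]
    · intro p h q h' hpq
      obtain ⟨a, b, c⟩ := p
      obtain ⟨a', b', c'⟩ := q
      simp only [coe_filter, mem_orderedTriangleFinset, Set.mem_ofPred_eq] at h h'
      obtain ⟨rfl, rfl⟩ := Prod.mk.inj hpq
      obtain ⟨⟨-, hbc, hca⟩, rfl⟩ := h
      obtain ⟨-, hs⟩ := h'
      have hc : c ∈ ({a, b, c'} : Finset V) := hs ▸ by simp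
      simp only [mem_insert, mem_singleton] at hc
      rcases hc with rfl | rfl | rfl
      · exact absurd rfl hca.ne
      · exact absurd rfl hbc.ne
      · rfl

theorem specRad_eq_sSup :
    specRad G = sSup (Set.range (G.isHermitian_adjMatrix ℝ).eigenvalues) := by
  rw [specRad, adjMat_eq_adjMatrix, (G.isHermitian_adjMatrix ℝ).setOf_exists_mulVec_eq_smul_eq_range]

theorem isGreatest_specRad [Nonempty V] :
    IsGreatest (Set.range (G.isHermitian_adjMatrix ℝ).eigenvalues) (specRad G) := by
  rw [specRad_eq_sSup]
  exact ⟨(Set.range_nonempty _).csSup_mem (Set.finite_range _),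
    fun _ h => le_csSup (Set.finite_range _).bddAbove h⟩

end SimpleGraph

open SimpleGraph in
theorem stmt2_general {V : Type*} [Fintype V] [DecidableEq V] (G : SimpleGraph V)
    [DecidableRel G.Adj] :
    (G.edgeFinset.card : ℝ) ≥
      specRad G ^ 2 - 3 * ((G.cliqueFinset 3).card : ℝ) / specRad G := by
  rcases isEmpty_or_nonempty V with hV | hV
  · simp [specRad_eq_sSup, Set.range_eq_empty]
  set hA := G.isHermitian_adjMatrix ℝ
  obtain ⟨⟨i₀, hi₀⟩, hmax⟩ := G.isGreatest_specRad
  have hle : ∀ i, hA.eigenvalues i ≤ specRad G := fun i => hmax ⟨i, rfl⟩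
  have hge := hA.neg_le_eigenvalues_of_nonneg G.adjMatrix_nonneg hle
  have hsq : ∑ i, hA.eigenvalues i ^ 2 = 2 * #G.edgeFinset := by
    simpa [hA.trace_pow] using G.trace_adjMatrix_sq (α := ℝ)
  have hcube : ∑ i, hA.eigenvalues i ^ 3 ≤ 6 * #(G.cliqueFinset 3) := calc
    _ = (#G.orderedTriangleFinset : ℝ) := by
      simpa [hA.trace_pow] using G.trace_adjMatrix_pow_three (α := ℝ)
    _ ≤ 6 * #(G.cliqueFinset 3) := by exact_mod_cast G.card_orderedTriangleFinset_le
  have key := two_mul_pow_three_le_sum_pow_three_add hi₀ hge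
  rw [hsq] at key
  rcases (show 0 ≤ specRad G by linarith [hge i₀]).eq_or_lt with h0 | hpos
  · simp [← h0] -- `x / 0 = 0`
  · rw [ge_iff_le, sub_le_iff_le_add, ← sub_le_iff_le_add', le_div_iff₀ hpos]
    nlinarith

theorem stmt2 {V : Type*} [Fintype V] [DecidableEq V] (G : SimpleGraph V)
    [DecidableRel G.Adj] (hE : G.edgeFinset.Nonempty) :
    (G.edgeFinset.card : ℝ) ≥
      specRad G ^ 2 - 3 * ((G.cliqueFinset 3).card : ℝ) / specRad G :=
  stmt2_general G
end

section
/- Let S_{n,k} be the graph obtained by joining every vertex of K_k to n−k isolated vertices. Every graph G on n vertices with ρ(G) > √(n−1) contains a cycle of length 3 or a cycle of length 4. -/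
open SimpleGraph Walk in
lemma tri_cycle {V : Type*} {G : SimpleGraph V} {a b c : V}
    (hab : G.Adj a b) (hbc : G.Adj b c) (hca : G.Adj c a) :
    ∃ (u : V) (w : G.Walk u u), w.IsCycle ∧ (w.length = 3 ∨ w.length = 4) := by
  refine ⟨a, .cons hab (.cons hbc (.cons hca .nil)), ?_, Or.inl rfl⟩
  have h1 := hab.ne; have h2 := hbc.ne; have h3 := hca.ne
  simp [Walk.isCycle_def, Walk.isTrail_def, List.Nodup, h1, h2, h3, Sym2.eq, Sym2.rel_iff',
    h1.symm, h2.symm, h3.symm]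

open SimpleGraph Walk in
lemma quad_cycle {V : Type*} {G : SimpleGraph V} {a b c d : V}
    (hab : G.Adj a b) (hbc : G.Adj b c) (hcd : G.Adj c d) (hda : G.Adj d a)
    (hac : a ≠ c) (hbd : b ≠ d) :
    ∃ (u : V) (w : G.Walk u u), w.IsCycle ∧ (w.length = 3 ∨ w.length = 4) := by
  refine ⟨a, .cons hab (.cons hbc (.cons hcd (.cons hda .nil))), ?_, Or.inr rfl⟩
  have h1 := hab.ne; have h2 := hbc.ne; have h3 := hcd.ne; have h4 := hda.ne
  simp [Walk.isCycle_def, Walk.isTrail_def, List.Nodup, h1, h2, h3, h4, hac, hbd, Sym2.eq,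
    Sym2.rel_iff', h1.symm, h2.symm, h3.symm, h4.symm, hac.symm, hbd.symm]

open Finset in
lemma rowsum_bound {V : Type*} [Fintype V] (G : SimpleGraph V)
    (hno : ¬ ∃ (u : V) (c : G.Walk u u), c.IsCycle ∧ (c.length = 3 ∨ c.length = 4)) (i : V) :
    ∑ j, (∑ k, (adjMat G) i k * (adjMat G) k j) ≤ (Fintype.card V : ℝ) - 1 := by
  classical
  have hA : ∀ a b : V, (adjMat G) a b = if G.Adj a b then (1:ℝ) else 0 := fun a b => rfl
  have hterm : ∀ j k : V, (adjMat G) i k * (adjMat G) k j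
      = if G.Adj i k ∧ G.Adj k j then (1:ℝ) else 0 := by
    intro j k; rw [hA, hA]
    by_cases h1 : G.Adj i k <;> by_cases h2 : G.Adj k j <;> simp [h1, h2]
  have hcj : ∀ j : V, j ≠ i →
      (∑ k, (adjMat G) i k * (adjMat G) k j) ≤ 1 - (adjMat G) i j := by
    intro j hji
    by_cases hadj : G.Adj i j
    · have hz : ∀ k : V, (adjMat G) i k * (adjMat G) k j = 0 := by
        intro k
        rw [hterm]
        split_ifs with hk
        · exact absurd (tri_cycle hk.1 hk.2 hadj.symm) hno
        · rfl
      rw [Finset.sum_congr rfl fun k _ => hz k]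
      simp [hA, hadj]
    · simp_rw [hterm]
      rw [Finset.sum_boole]
      have hcard : (univ.filter fun k => G.Adj i k ∧ G.Adj k j).card ≤ 1 := by
        rw [Finset.card_le_one]
        intro k hk k' hk'
        rw [Finset.mem_filter] at hk hk'
        obtain ⟨-, hk1, hk2⟩ := hk
        obtain ⟨-, hk1', hk2'⟩ := hk'
        by_contra hkk
        exact hno (quad_cycle hk1 hk2 hk2'.symm hk1'.symm (fun e => hji e.symm) hkk)
      have : ((univ.filter fun k => G.Adj i k ∧ G.Adj k j).card : ℝ) ≤ 1 := by
        exact_mod_cast hcard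
      simpa [hA, hadj] using this
  have hci : (∑ k, (adjMat G) i k * (adjMat G) k i) = ∑ k, (adjMat G) i k := by
    refine Finset.sum_congr rfl fun k _ => ?_
    rw [hterm, hA]
    by_cases hk : G.Adj i k
    · simp [hk, hk.symm]
    · simp [hk]
  have hsplit : ∑ j, (∑ k, (adjMat G) i k * (adjMat G) k j)
      = (∑ k, (adjMat G) i k * (adjMat G) k i) + ∑ j ∈ univ.erase i, (∑ k, (adjMat G) i k * (adjMat G) k j) :=
    (Finset.add_sum_erase _ _ (mem_univ i)).symm
  rw [hsplit, hci]
  have h1 : ∑ j ∈ univ.erase i, (∑ k, (adjMat G) i k * (adjMat G) k j)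
      ≤ ∑ j ∈ univ.erase i, (1 - (adjMat G) i j) :=
    Finset.sum_le_sum fun j hj => hcj j (Finset.ne_of_mem_erase hj)
  have h2 : ∑ j ∈ univ.erase i, (1 - (adjMat G) i j)
      = ((Fintype.card V : ℝ) - 1) - ∑ j ∈ univ.erase i, (adjMat G) i j := by
    have hc1 : 1 ≤ Fintype.card V := @Fintype.card_pos V _ ⟨i⟩
    rw [Finset.sum_sub_distrib, Finset.sum_const, Finset.card_erase_of_mem (mem_univ i),
      Finset.card_univ, nsmul_eq_mul, mul_one, Nat.cast_sub hc1, Nat.cast_one]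
  have h3 : ∑ j ∈ univ.erase i, (adjMat G) i j = ∑ j, (adjMat G) i j := by
    apply Finset.sum_erase
    simp [hA]
  rw [h3] at h2
  linarith [h1, h2.le, h2.ge]

open Finset in
lemma eig_bound {V : Type*} [Fintype V] (G : SimpleGraph V) (t : ℝ) (x : V → ℝ) (hx : x ≠ 0)
    (hev : (adjMat G).mulVec x = t • x) :
    ∃ i : V, t ^ 2 ≤ ∑ j, (∑ k, (adjMat G) i k * (adjMat G) k j) := by
  classical
  have hV : Nonempty V := by
    by_contra hne
    exact hx (funext fun v => absurd ⟨v⟩ hne)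
  obtain ⟨i, -, hi⟩ := Finset.exists_max_image univ (fun j => |x j|) univ_nonempty
  have hi' : ∀ j, |x j| ≤ |x i| := fun j => hi j (mem_univ j)
  have hxi : 0 < |x i| := by
    rcases lt_or_eq_of_le (abs_nonneg (x i)) with h | h
    · exact h
    · exfalso; apply hx; funext j
      have := hi' j; rw [← h] at this
      simpa using le_antisymm this (abs_nonneg _)
  refine ⟨i, ?_⟩
  have h2 : (adjMat G).mulVec ((adjMat G).mulVec x) = (t ^ 2) • x := by
    rw [hev, Matrix.mulVec_smul, hev, smul_smul, sq]
  have h2i : ∑ j, (∑ k, (adjMat G) i k * (adjMat G) k j) * x j = t ^ 2 * x i := by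
    have := congrFun h2 i
    simp only [Matrix.mulVec, dotProduct, Pi.smul_apply, smul_eq_mul] at this
    rw [← this]
    simp_rw [Finset.sum_mul, Finset.mul_sum, mul_assoc]
    exact Finset.sum_comm
  have hnn : ∀ j k, 0 ≤ (adjMat G) i k * (adjMat G) k j := by
    intro j k
    simp only [adjMat, Matrix.of_apply]
    positivity
  have hcnn : ∀ j, 0 ≤ ∑ k, (adjMat G) i k * (adjMat G) k j :=
    fun j => Finset.sum_nonneg fun k _ => hnn j k
  have key : t ^ 2 * |x i| ≤ (∑ j, (∑ k, (adjMat G) i k * (adjMat G) k j)) * |x i| := by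
    calc t ^ 2 * |x i| = |t ^ 2 * x i| := by rw [abs_mul, abs_of_nonneg (sq_nonneg t)]
    _ = |∑ j, (∑ k, (adjMat G) i k * (adjMat G) k j) * x j| := by rw [h2i]
    _ ≤ ∑ j, |(∑ k, (adjMat G) i k * (adjMat G) k j) * x j| := Finset.abs_sum_le_sum_abs _ _
    _ ≤ ∑ j, (∑ k, (adjMat G) i k * (adjMat G) k j) * |x i| := by
        refine Finset.sum_le_sum fun j _ => ?_
        rw [abs_mul, abs_of_nonneg (hcnn j)]
        exact mul_le_mul_of_nonneg_left (hi' j) (hcnn j)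
    _ = _ := by rw [← Finset.sum_mul]
  exact le_of_mul_le_mul_right key hxi

theorem stmt4 {V : Type*} [Fintype V] (G : SimpleGraph V) (n : ℕ)
    (hn : Fintype.card V = n) (h : specRad G > Real.sqrt ((n : ℝ) - 1)) :
    ∃ (u : V) (c : G.Walk u u), c.IsCycle ∧ (c.length = 3 ∨ c.length = 4) := by
  by_contra hno
  refine absurd h (not_lt.mpr ?_)
  apply Real.sSup_le
  · rintro t ⟨x, hx, hev⟩
    obtain ⟨i, hti⟩ := eig_bound G t x hx hev
    have hrow := rowsum_bound G hno i
    have ht2 : t ^ 2 ≤ (n : ℝ) - 1 := by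
      rw [← hn]; exact hti.trans hrow
    calc t ≤ |t| := le_abs_self t
    _ = Real.sqrt (t ^ 2) := (Real.sqrt_sq_eq_abs t).symm
    _ ≤ Real.sqrt ((n : ℝ) - 1) := Real.sqrt_le_sqrt ht2
  · exact Real.sqrt_nonneg _
end

section
/- Let K_4 • K_{1,n−4} be the graph obtained by identifying a vertex of K_4 with the center of a star K_{1,n−4}. Then ρ(K_4 • K_{1,n−4}) > √(n−1) + 3/(n−1) for n ≥ 5. -/
/-!
For the symmetric adjacency matrix `A`, every nonzero vector `x` gives `xᵀAx / xᵀx ≤ ρ`, since the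
supremum of the Rayleigh quotient is an eigenvalue. The Perron vector of `K_{1,n-1}`, scaled to
`(√(n-1), 1, …, 1)`, has Rayleigh quotient exactly `√(n-1) + 3/(n-1)` in `K₄ • K_{1,n-4}` without
being an eigenvector, and raising its entries on the other three vertices of `K₄` to `1 + 1/(n-1)`
makes the quotient strictly larger. The blocks `{0}`, `{1,2,3}`, `{4,…,n-1}` form an equitable
partition, so `A` maps vectors constant on them to vectors of the same kind and the quotient is an
explicit function of three numbers.
-/

open Matrix WithLp

theorem Matrix.IsHermitian.exists_eigenvalue_ge_rayleigh {ι : Type*} [Fintype ι]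
    [DecidableEq ι] {A : Matrix ι ι ℝ} (hA : A.IsHermitian) {x : ι → ℝ} (hx : x ≠ 0) :
    ∃ t, (∃ y, y ≠ 0 ∧ A *ᵥ y = t • y) ∧ x ⬝ᵥ A *ᵥ x / (x ⬝ᵥ x) ≤ t := by
  have : Nontrivial (EuclideanSpace ℝ ι) := ⟨⟨toLp 2 x, 0, by simpa using hx⟩⟩
  have hT := isSymmetric_toEuclideanLin_iff.mpr hA
  obtain ⟨y, hy⟩ := hT.hasEigenvalue_iSup_of_finiteDimensional.exists_hasEigenvector
  refine ⟨_, ⟨ofLp y, by simpa using hy.2, congrArg ofLp hy.apply_eq_smul⟩, ?_⟩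
  obtain ⟨C, hC⟩ := (LinearMap.toContinuousLinearMap A.toEuclideanLin).bddAbove_rayleighQuotient
  refine le_of_eq_of_le ?_
    (le_ciSup ⟨C, ?_⟩ (⟨toLp 2 x, by simpa using hx⟩ : {x : EuclideanSpace ℝ ι // x ≠ 0}))
  · simp only [← real_inner_self_eq_norm_sq, toLpLin_toLp, EuclideanSpace.inner_toLp_toLp,
      toLin'_apply, star_trivial, RCLike.re_to_real, dotProduct_comm x]
  · rintro _ ⟨z, rfl⟩
    exact (le_abs_self _).trans (hC ⟨z, rfl⟩)

theorem Matrix.finite_setOf_mulVec_eq_smul {ι : Type*} [Fintype ι] [DecidableEq ι]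
    {K : Type*} [Field K] (A : Matrix ι ι K) :
    {t : K | ∃ y, y ≠ 0 ∧ A *ᵥ y = t • y}.Finite :=
  (Module.End.finite_hasEigenvalue (toLin' A)).subset fun _ ⟨_, hy, hAy⟩ =>
    Module.End.hasEigenvalue_of_hasEigenvector ⟨Module.End.mem_eigenspace_iff.mpr hAy, hy⟩

theorem isHermitian_adjMat {V : Type*} [Fintype V] (G : SimpleGraph V) :
    (adjMat G).IsHermitian := by
  ext i j
  simp only [conjTranspose_apply, adjMat, of_apply, star_trivial]
  rw [G.adj_comm]

theorem rayleigh_le_specRad {V : Type*} [Fintype V] (G : SimpleGraph V) {x : V → ℝ}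
    (hx : x ≠ 0) :
    x ⬝ᵥ adjMat G *ᵥ x / (x ⬝ᵥ x) ≤ specRad G := by
  classical
  obtain ⟨t, ht, hxt⟩ := (isHermitian_adjMat G).exists_eigenvalue_ge_rayleigh hx
  exact hxt.trans (le_csSup (finite_setOf_mulVec_eq_smul _).bddAbove ht)

theorem K4Star_adj {n : ℕ} {i j : Fin n} :
    (K4Star n).Adj i j ↔
      i.val ≠ j.val ∧ (i.val = 0 ∨ j.val = 0 ∨ (i.val < 4 ∧ j.val < 4)) := by
  simp only [K4Star, SimpleGraph.fromRel_adj, ne_eq, Fin.val_inj]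
  tauto

def k4StarBlockVec (n : ℕ) (a b c : ℝ) : Fin n → ℝ :=
  fun i => if i.val = 0 then a else if i.val < 4 then b else c

theorem sum_k4StarBlockVec {n : ℕ} (hn : 4 ≤ n) (a b c : ℝ) :
    ∑ i, k4StarBlockVec n a b c i = a + 3 * b + ((n : ℝ) - 4) * c := by
  obtain ⟨k, rfl⟩ := Nat.exists_eq_add_of_le' hn
  simp [Fin.sum_univ_succ, k4StarBlockVec, Nat.succ_lt_succ_iff]
  ring

theorem dotProduct_k4StarBlockVec {n : ℕ} (hn : 4 ≤ n) (a b c a' b' c' : ℝ) :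
    k4StarBlockVec n a b c ⬝ᵥ k4StarBlockVec n a' b' c' =
      a * a' + 3 * (b * b') + ((n : ℝ) - 4) * (c * c') := by
  rw [dotProduct, ← sum_k4StarBlockVec hn]
  congr 1 with i
  simp only [k4StarBlockVec]
  split_ifs <;> rfl

theorem adjMat_K4Star_mulVec_k4StarBlockVec {n : ℕ} (hn : 4 ≤ n) (a b c : ℝ) :
    adjMat (K4Star n) *ᵥ k4StarBlockVec n a b c =
      k4StarBlockVec n (3 * b + ((n : ℝ) - 4) * c) (a + 2 * b) a := by
  ext i
  have hrow : ∀ j, adjMat (K4Star n) i j * k4StarBlockVec n a b c j =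
      if i.val = 0 then k4StarBlockVec n 0 b c j
      else if i.val < 4 then k4StarBlockVec n a b 0 j - if i = j then b else 0
      else k4StarBlockVec n a 0 0 j := by
    intro j
    simp only [adjMat, of_apply, K4Star_adj, k4StarBlockVec, ← Fin.val_inj]
    split_ifs <;> first | omega | ring
  simp only [mulVec, dotProduct, hrow]
  split_ifs with h0 h4
  · rw [sum_k4StarBlockVec hn]
    simp [k4StarBlockVec, h0]
  · rw [Finset.sum_sub_distrib, sum_k4StarBlockVec hn, Finset.sum_ite_eq]
    simp [k4StarBlockVec, h0, h4]
    ring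
  · rw [sum_k4StarBlockVec hn]
    simp [k4StarBlockVec, h0, h4]

theorem add_three_div_lt_of_sq_eq {m s b : ℝ} (hm : 4 ≤ m) (hs : s ^ 2 = m)
    (hb : b = 1 + 1 / m) :
    s + 3 / m < (2 * s * (m - 3 + 3 * b) + 6 * b ^ 2) / (2 * m - 3 + 3 * b ^ 2) := by
  have hm0 : 0 < m := by linarith
  have hb1 : b - 1 = 1 / m := by rw [hb, add_sub_cancel_left]
  have hgap : 0 < (6 * m - 9) * (b + 1) - 3 * s * m * (b - 1) := by
    have hsm : 2 * s ≤ m := by nlinarith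
    have hb2 : 2 < b + 1 := by linarith [show 0 < 1 / m by positivity]
    rw [hb1, mul_assoc (3 * s), mul_one_div_cancel hm0.ne']
    nlinarith
  have hdiff : (2 * s * (m - 3 + 3 * b) + 6 * b ^ 2) - (s + 3 / m) * (2 * m - 3 + 3 * b ^ 2) =
      (b - 1) * ((6 * m - 9) * (b + 1) - 3 * s * m * (b - 1)) / m := by
    field_simp
    ring
  rw [lt_div_iff₀ (by nlinarith [sq_nonneg b]), ← sub_pos, hdiff]
  exact div_pos (mul_pos (by rw [hb1]; positivity) hgap) hm0

theorem stmt5 (n : ℕ) (hn : 5 ≤ n) :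
    specRad (K4Star n) > Real.sqrt ((n : ℝ) - 1) + 3 / ((n : ℝ) - 1) := by
  have hn4 : 4 ≤ n := by omega
  have hm : (4 : ℝ) ≤ (n : ℝ) - 1 := by
    have : (5 : ℝ) ≤ n := by exact_mod_cast hn
    linarith
  set s := Real.sqrt ((n : ℝ) - 1)
  set b := 1 + 1 / ((n : ℝ) - 1)
  have hs : 0 < s := Real.sqrt_pos.mpr (by linarith)
  have hx : k4StarBlockVec n s b 1 ≠ 0 := fun h => hs.ne' (congrFun h ⟨0, by omega⟩)
  calc s + 3 / ((n : ℝ) - 1)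
      < (2 * s * ((n : ℝ) - 1 - 3 + 3 * b) + 6 * b ^ 2) / (2 * ((n : ℝ) - 1) - 3 + 3 * b ^ 2) :=
        add_three_div_lt_of_sq_eq hm (Real.sq_sqrt (by linarith)) rfl
    _ = k4StarBlockVec n s b 1 ⬝ᵥ adjMat (K4Star n) *ᵥ k4StarBlockVec n s b 1 /
          (k4StarBlockVec n s b 1 ⬝ᵥ k4StarBlockVec n s b 1) := by
        rw [adjMat_K4Star_mulVec_k4StarBlockVec hn4, dotProduct_k4StarBlockVec hn4,
          dotProduct_k4StarBlockVec hn4, Real.mul_self_sqrt (by linarith)]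
        ring
    _ ≤ specRad (K4Star n) := rayleigh_le_specRad (K4Star n) hx
end

section
/- Let K_{1,n−1}^+ be the star K_{1,n−1} with one extra edge added between two leaves. Then ρ(K_{1,n−1}^+) > √(n−1) + 1/(n−1) for n ≥ 4. -/
theorem stmt6 (n : ℕ) (hn : 4 ≤ n) :
    specRad (starPlus n) > Real.sqrt ((n : ℝ) - 1) + 1 / ((n : ℝ) - 1) := by
  classical
  have hn4 : (4 : ℝ) ≤ (n : ℝ) := by exact_mod_cast hn
  set m : ℝ := (n : ℝ) - 1 with hm_def
  have hm3 : (3 : ℝ) ≤ m := by simp only [hm_def]; linarith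
  have hm0 : (0 : ℝ) < m := by linarith
  set r : ℝ := Real.sqrt m with hr_def
  have hr2 : r ^ 2 = m := Real.sq_sqrt hm0.le
  have hrnn : 0 ≤ r := Real.sqrt_nonneg m
  have hr1 : 1 < r := by nlinarith
  set s : ℝ := r + 1 / m with hs_def
  have h1m : 0 < 1 / m := by positivity
  have hs1 : 1 < s := by simp only [hs_def]; linarith
  set f : ℝ → ℝ := fun t => t ^ 3 - t ^ 2 - m * t + (m - 2) with hf_def
  have hfs : f s < 0 := by
    have hrne : r ≠ 0 := by linarith
    have key : f s * r ^ 6 = -((2 * r ^ 2 - 3) * r ^ 3 + (r ^ 2 - 1)) := by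
      simp only [hf_def, hs_def, ← hr2]
      field_simp
      ring
    nlinarith [pow_pos (lt_trans one_pos hr1) 3, pow_pos (lt_trans one_pos hr1) 6]
  have hfn : 0 < f (n : ℝ) := by
    simp only [hf_def, hm_def]
    nlinarith
  have hsn : s < (n : ℝ) := by
    have hrm : r ≤ m := by nlinarith
    have h13 : 1 / m < 1 := by rw [div_lt_one hm0]; linarith
    simp only [hs_def, hm_def] at *
    linarith
  obtain ⟨t, htIoo, htroot⟩ :=
    intermediate_value_Ioo hsn.le ((by fun_prop : Continuous f).continuousOn)
      (Set.mem_Ioo.mpr ⟨hfs, hfn⟩)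
  have hts : s < t := htIoo.1
  have ht1 : 1 < t := lt_trans hs1 hts
  have htne1 : t - 1 ≠ 0 := by linarith
  have hroot : t ^ 3 - t ^ 2 - m * t + (m - 2) = 0 := htroot
  -- vertices
  have hn0 : 0 < n := by omega
  set v0 : Fin n := ⟨0, by omega⟩ with hv0
  set v1 : Fin n := ⟨1, by omega⟩ with hv1
  set v2 : Fin n := ⟨2, by omega⟩ with hv2
  set A := adjMat (starPlus n) with hA_def
  have hadj : ∀ i j : Fin n, (starPlus n).Adj i j ↔
      i ≠ j ∧ ((i : ℕ) = 0 ∨ (j : ℕ) = 0 ∨ ((i : ℕ) < 3 ∧ (j : ℕ) < 3)) := by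
    intro i j
    simp only [starPlus, SimpleGraph.fromRel_adj]
    tauto
  have hA1 : ∀ i j, (starPlus n).Adj i j → A i j = 1 := by
    intro i j h; simp [hA_def, adjMat, h]
  have hA0 : ∀ i j, ¬ (starPlus n).Adj i j → A i j = 0 := by
    intro i j h; simp [hA_def, adjMat, h]
  set x : Fin n → ℝ := fun j => if j = v0 then t else if (j : ℕ) < 3 then t / (t - 1) else 1
    with hx_def
  have hx_v0 : x v0 = t := by simp [hx_def]
  have hx_v1 : x v1 = t / (t - 1) := by
    simp only [hx_def]
    rw [if_neg (by simp [hv0, hv1, Fin.ext_iff]), if_pos (by simp [hv1])]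
  have hx_v2 : x v2 = t / (t - 1) := by
    simp only [hx_def]
    rw [if_neg (by simp [hv0, hv2, Fin.ext_iff]), if_pos (by simp [hv2])]
  have hxne : x ≠ 0 := by
    intro h
    have := congrFun h v0
    rw [hx_v0] at this
    simp at this
    linarith
  have htri : ∀ j : Fin n, (j : ℕ) < 3 → j = v0 ∨ j = v1 ∨ j = v2 := by
    intro j hj
    simp only [Fin.ext_iff, hv0, hv1, hv2]
    omega
  have heig : A.mulVec x = t • x := by
    funext i
    show ∑ j, A i j * x j = t * x i
    rcases Nat.lt_or_ge (i : ℕ) 3 with hi3 | hi3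
    · rcases htri i hi3 with hi | hi | hi <;> subst hi
      · -- row v0
        have hsum : ∀ j : Fin n, A v0 j * x j =
            ((if j = v1 then t / (t - 1) else 0) + (if j = v2 then t / (t - 1) else 0)) +
            (1 - ((if j = v0 then (1:ℝ) else 0) + (if j = v1 then (1:ℝ) else 0) +
              (if j = v2 then (1:ℝ) else 0))) := by
          intro j
          by_cases h0 : j = v0
          · subst h0
            rw [hA0 _ _ (by rw [hadj]; simp), hx_v0]
            rw [if_neg (by simp [hv0, hv1, Fin.ext_iff]),
              if_neg (by simp [hv0, hv2, Fin.ext_iff]), if_pos rfl,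
              if_neg (by simp [hv0, hv1, Fin.ext_iff]),
              if_neg (by simp [hv0, hv2, Fin.ext_iff])]
            ring
          · have hj0 : (j : ℕ) ≠ 0 := by
              intro h; apply h0; simp [Fin.ext_iff, hv0, h]
            have hAdj : (starPlus n).Adj v0 j := by
              rw [hadj]
              exact ⟨fun h => h0 h.symm, Or.inl (by simp [hv0])⟩
            rw [hA1 _ _ hAdj, one_mul]
            by_cases h1 : j = v1
            · subst h1
              rw [hx_v1, if_pos rfl, if_neg (by simp [hv1, hv2, Fin.ext_iff]),
                if_neg h0, if_pos rfl, if_neg (by simp [hv1, hv2, Fin.ext_iff])]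
              ring
            · by_cases h2 : j = v2
              · subst h2
                rw [hx_v2, if_neg (by simp [hv1, hv2, Fin.ext_iff]), if_pos rfl,
                  if_neg h0, if_neg (by simp [hv1, hv2, Fin.ext_iff]), if_pos rfl]
                ring
              · have hj3 : ¬ (j : ℕ) < 3 := by
                  intro h
                  rcases htri j h with h | h | h <;> [exact h0 h; exact h1 h; exact h2 h]
                simp only [hx_def, if_neg h0, if_neg hj3, if_neg h1, if_neg h2]
                ring
        rw [Finset.sum_congr rfl (fun j _ => hsum j)]
        rw [Finset.sum_add_distrib, Finset.sum_add_distrib, Finset.sum_sub_distrib,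
          Finset.sum_add_distrib, Finset.sum_add_distrib, Finset.sum_ite_eq',
          Finset.sum_ite_eq', Finset.sum_ite_eq', Finset.sum_ite_eq', Finset.sum_ite_eq',
          Finset.sum_const, Finset.card_univ, Fintype.card_fin]
        simp only [Finset.mem_univ, if_pos, hx_v0, nsmul_eq_mul]
        have hnm : (n : ℝ) = m + 1 := by simp [hm_def]
        have hroot2 : t ^ 4 - t ^ 3 - m * t ^ 2 + (m - 2) * t = 0 := by
          linear_combination t * hroot
        have hx1 : t * (n : ℝ) = t * m + t := by linear_combination t * hnm
        have hx2 : t ^ 2 * (n : ℝ) = t ^ 2 * m + t ^ 2 := by linear_combination t ^ 2 * hnm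
        field_simp
        linarith [hroot, hroot2, hx1, hx2, hnm]
      · -- row v1
        have hsum : ∀ j : Fin n, A v1 j * x j =
            (if j = v0 then t else 0) + (if j = v2 then t / (t - 1) else 0) := by
          intro j
          by_cases h0 : j = v0
          · subst h0
            rw [hA1 _ _ (by rw [hadj]; exact ⟨by simp [hv0, hv1, Fin.ext_iff], Or.inr (Or.inl (by simp [hv0]))⟩),
              hx_v0, if_pos rfl, if_neg (by simp [hv0, hv2, Fin.ext_iff])]
            ring
          · by_cases h2 : j = v2
            · subst h2
              rw [hA1 _ _ (by rw [hadj]; exact ⟨by simp [hv1, hv2, Fin.ext_iff], Or.inr (Or.inr ⟨by simp [hv1], by simp [hv2]⟩)⟩),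
                hx_v2, if_neg (by simp [hv0, hv2, Fin.ext_iff]), if_pos rfl]
              ring
            · rw [hA0, if_neg h0, if_neg h2, zero_mul, add_zero]
              rw [hadj]
              rintro ⟨hne, h | h | ⟨-, h⟩⟩
              · simp [hv1] at h
              · exact h0 (by simp [Fin.ext_iff, hv0, h])
              · rcases htri j h with hh | hh | hh
                · exact h0 hh
                · exact hne hh.symm
                · exact h2 hh
        rw [Finset.sum_congr rfl (fun j _ => hsum j), Finset.sum_add_distrib,
          Finset.sum_ite_eq', Finset.sum_ite_eq']
        simp only [Finset.mem_univ, if_pos, hx_v1]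
        field_simp
        ring
      · -- row v2
        have hsum : ∀ j : Fin n, A v2 j * x j =
            (if j = v0 then t else 0) + (if j = v1 then t / (t - 1) else 0) := by
          intro j
          by_cases h0 : j = v0
          · subst h0
            rw [hA1 _ _ (by rw [hadj]; exact ⟨by simp [hv0, hv2, Fin.ext_iff], Or.inr (Or.inl (by simp [hv0]))⟩),
              hx_v0, if_pos rfl, if_neg (by simp [hv0, hv1, Fin.ext_iff])]
            ring
          · by_cases h1 : j = v1
            · subst h1
              rw [hA1 _ _ (by rw [hadj]; exact ⟨by simp [hv1, hv2, Fin.ext_iff], Or.inr (Or.inr ⟨by simp [hv2], by simp [hv1]⟩)⟩),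
                hx_v1, if_neg (by simp [hv0, hv1, Fin.ext_iff]), if_pos rfl]
              ring
            · rw [hA0, if_neg h0, if_neg h1, zero_mul, add_zero]
              rw [hadj]
              rintro ⟨hne, h | h | ⟨-, h⟩⟩
              · simp [hv2] at h
              · exact h0 (by simp [Fin.ext_iff, hv0, h])
              · rcases htri j h with hh | hh | hh
                · exact h0 hh
                · exact h1 hh
                · exact hne hh.symm
        rw [Finset.sum_congr rfl (fun j _ => hsum j), Finset.sum_add_distrib,
          Finset.sum_ite_eq', Finset.sum_ite_eq']
        simp only [Finset.mem_univ, if_pos, hx_v2]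
        field_simp
        ring
    · -- row with index ≥ 3
      have hi0 : i ≠ v0 := by
        intro h; rw [h] at hi3; simp [hv0] at hi3
      have hsum : ∀ j : Fin n, A i j * x j = if j = v0 then t else 0 := by
        intro j
        by_cases h0 : j = v0
        · subst h0
          rw [hA1 _ _ (by rw [hadj]; exact ⟨hi0, Or.inr (Or.inl (by simp [hv0]))⟩),
            hx_v0, if_pos rfl]
          ring
        · rw [hA0, zero_mul, if_neg h0]
          rw [hadj]
          rintro ⟨hne, h | h | ⟨h, -⟩⟩
          · omega
          · exact h0 (by simp [Fin.ext_iff, hv0, h])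
          · omega
      rw [Finset.sum_congr rfl (fun j _ => hsum j), Finset.sum_ite_eq']
      simp only [Finset.mem_univ, if_pos]
      have hxi : x i = 1 := by
        simp only [hx_def, if_neg hi0, if_neg (by omega : ¬ (i : ℕ) < 3)]
      rw [hxi]
      ring
  -- bounded above
  have hbdd : BddAbove {u : ℝ | ∃ y : Fin n → ℝ, y ≠ 0 ∧ (adjMat (starPlus n)).mulVec y = u • y} := by
    refine ⟨(n : ℝ), ?_⟩
    rintro u ⟨y, hy0, hy⟩
    obtain ⟨i, -, hi⟩ := Finset.exists_max_image Finset.univ (fun i => |y i|) ⟨v0, Finset.mem_univ _⟩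
    have hipos : 0 < |y i| := by
      rcases Function.ne_iff.mp hy0 with ⟨j, hj⟩
      have : 0 < |y j| := abs_pos.mpr hj
      exact lt_of_lt_of_le this (hi j (Finset.mem_univ _))
    have hrow : u * y i = ∑ j, A i j * y j := by
      have := congrFun hy i
      rw [Pi.smul_apply, smul_eq_mul] at this
      rw [← this]; rfl
    have hAbs : ∀ i' j : Fin n, |A i' j| ≤ 1 := by
      intro i' j
      by_cases h : (starPlus n).Adj i' j
      · rw [hA1 _ _ h]; simp
      · rw [hA0 _ _ h]; simp
    have hle : |u| * |y i| ≤ (n : ℝ) * |y i| := by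
      calc |u| * |y i| = |u * y i| := (abs_mul u (y i)).symm
        _ = |∑ j, A i j * y j| := by rw [hrow]
        _ ≤ ∑ j, |A i j * y j| := Finset.abs_sum_le_sum_abs _ _
        _ ≤ ∑ _j : Fin n, |y i| := by
            refine Finset.sum_le_sum fun j _ => ?_
            rw [abs_mul]
            calc |A i j| * |y j| ≤ 1 * |y i| :=
                  mul_le_mul (hAbs i j) (hi j (Finset.mem_univ _)) (abs_nonneg _)
                    zero_le_one
              _ = |y i| := one_mul _
        _ = (n : ℝ) * |y i| := by
            rw [Finset.sum_const, Finset.card_univ, Fintype.card_fin, nsmul_eq_mul]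
    have : |u| ≤ (n : ℝ) := le_of_mul_le_mul_right hle hipos
    exact le_trans (le_abs_self u) this
  have hmem : t ∈ {u : ℝ | ∃ y : Fin n → ℝ, y ≠ 0 ∧ (adjMat (starPlus n)).mulVec y = u • y} :=
    ⟨x, hxne, heig⟩
  have hle := le_csSup hbdd hmem
  have : specRad (starPlus n) = sSup {u : ℝ | ∃ y : Fin n → ℝ, y ≠ 0 ∧ (adjMat (starPlus n)).mulVec y = u • y} := rfl
  rw [this]
  linarith
end

section
/- Let G be the graph K_{3,3} • K_{1,n−6}, obtained by identifying one vertex of K_{3,3} with the center of the star K_{1,n−6}. Then ρ(G)² = (n + 3 + √((n+3)² − 4(6n−36)))/2, and in particular ρ(G)² < n − 1 for n ≥ 17. -/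
open Finset
open scoped Classical

lemma mv_filter (n : ℕ) (x : Fin n → ℝ) (i : Fin n) :
    (adjMat (K33Star n)).mulVec x i
      = ∑ j ∈ univ.filter (fun j => (K33Star n).Adj i j), x j := by
  simp [adjMat, Matrix.mulVec, dotProduct, Finset.sum_filter, ite_mul]

lemma sum_triple (n : ℕ) (x : Fin n → ℝ) (a b c : ℕ) (ha : a < n) (hb : b < n) (hc : c < n)
    (hab : a ≠ b) (hac : a ≠ c) (hbc : b ≠ c) :
    ∑ j ∈ ({⟨a, ha⟩, ⟨b, hb⟩, ⟨c, hc⟩} : Finset (Fin n)), x j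
      = x ⟨a, ha⟩ + x ⟨b, hb⟩ + x ⟨c, hc⟩ := by
  rw [Finset.sum_insert (by simp [Fin.ext_iff]; omega),
      Finset.sum_insert (by simp [Fin.ext_iff]; omega), Finset.sum_singleton]
  ring

lemma mvD (n : ℕ) (hn : 17 ≤ n) (x : Fin n → ℝ) (i : Fin n) (hi : 6 ≤ i.val) :
    (adjMat (K33Star n)).mulVec x i = x ⟨0, by omega⟩ := by
  rw [mv_filter]
  have h : univ.filter (fun j => (K33Star n).Adj i j) = {(⟨0, by omega⟩ : Fin n)} := by
    ext j; simp [K33Star, SimpleGraph.fromRel_adj, Fin.ext_iff]; omega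
  rw [h, Finset.sum_singleton]

lemma mvC (n : ℕ) (hn : 17 ≤ n) (x : Fin n → ℝ) (i : Fin n) (hi : 3 ≤ i.val)
    (hi6 : i.val < 6) :
    (adjMat (K33Star n)).mulVec x i
      = x ⟨0, by omega⟩ + x ⟨1, by omega⟩ + x ⟨2, by omega⟩ := by
  rw [mv_filter]
  have h : univ.filter (fun j => (K33Star n).Adj i j)
      = {(⟨0, by omega⟩ : Fin n), (⟨1, by omega⟩ : Fin n), (⟨2, by omega⟩ : Fin n)} := by
    ext j; simp [K33Star, SimpleGraph.fromRel_adj, Fin.ext_iff]; omega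
  rw [h, sum_triple] <;> omega

lemma mvB (n : ℕ) (hn : 17 ≤ n) (x : Fin n → ℝ) (i : Fin n) (hi : 1 ≤ i.val)
    (hi3 : i.val < 3) :
    (adjMat (K33Star n)).mulVec x i
      = x ⟨3, by omega⟩ + x ⟨4, by omega⟩ + x ⟨5, by omega⟩ := by
  rw [mv_filter]
  have h : univ.filter (fun j => (K33Star n).Adj i j)
      = {(⟨3, by omega⟩ : Fin n), (⟨4, by omega⟩ : Fin n), (⟨5, by omega⟩ : Fin n)} := by
    ext j; simp [K33Star, SimpleGraph.fromRel_adj, Fin.ext_iff]; omega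
  rw [h, sum_triple] <;> omega

lemma card_F6 (n : ℕ) (hn : 17 ≤ n) :
    (univ.filter (fun j : Fin n => 6 ≤ j.val)).card = n - 6 := by
  have h : univ.filter (fun j : Fin n => ¬ 6 ≤ j.val)
      = {(⟨0, by omega⟩ : Fin n), ⟨1, by omega⟩, ⟨2, by omega⟩, ⟨3, by omega⟩,
         ⟨4, by omega⟩, ⟨5, by omega⟩} := by
    ext j; simp [Fin.ext_iff]; omega
  have h2 := Finset.card_filter_add_card_filter_not
    (s := (univ : Finset (Fin n))) (p := fun j : Fin n => 6 ≤ j.val)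
  rw [h] at h2
  have h3 : ({(⟨0, by omega⟩ : Fin n), ⟨1, by omega⟩, ⟨2, by omega⟩, ⟨3, by omega⟩,
         ⟨4, by omega⟩, ⟨5, by omega⟩} : Finset (Fin n)).card = 6 := by
    simp [Finset.card_insert_of_notMem, Fin.ext_iff]
  rw [h3] at h2
  simp at h2
  omega

lemma mvA (n : ℕ) (hn : 17 ≤ n) (x : Fin n → ℝ) (i : Fin n) (hi : i.val = 0) :
    (adjMat (K33Star n)).mulVec x i
      = x ⟨3, by omega⟩ + x ⟨4, by omega⟩ + x ⟨5, by omega⟩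
        + ∑ j ∈ univ.filter (fun j : Fin n => 6 ≤ j.val), x j := by
  rw [mv_filter]
  have h : univ.filter (fun j => (K33Star n).Adj i j)
      = ({(⟨3, by omega⟩ : Fin n), (⟨4, by omega⟩ : Fin n), (⟨5, by omega⟩ : Fin n)} : Finset (Fin n))
        ∪ univ.filter (fun j : Fin n => 6 ≤ j.val) := by
    ext j; simp [K33Star, SimpleGraph.fromRel_adj, Fin.ext_iff]; omega
  rw [h, Finset.sum_union (by simp [Finset.disjoint_left, Fin.ext_iff]; omega),
      sum_triple] <;> omega

set_option maxHeartbeats 1000000 in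
theorem stmt7 (n : ℕ) (hn : 17 ≤ n) :
    specRad (K33Star n) ^ 2
        = ((n : ℝ) + 3 + Real.sqrt (((n : ℝ) + 3) ^ 2 - 4 * (6 * (n : ℝ) - 36))) / 2 ∧
      specRad (K33Star n) ^ 2 < (n : ℝ) - 1 := by
  have hnR : (17 : ℝ) ≤ (n : ℝ) := by exact_mod_cast hn
  set D : ℝ := ((n : ℝ) + 3) ^ 2 - 4 * (6 * (n : ℝ) - 36) with hD
  have hDnn : 0 ≤ D := by nlinarith
  set s : ℝ := Real.sqrt D with hs
  have hs2 : s ^ 2 = D := Real.sq_sqrt hDnn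
  have hsnn : 0 ≤ s := Real.sqrt_nonneg _
  set μ : ℝ := ((n : ℝ) + 3 + s) / 2 with hμ
  have hμpos : 0 < μ := by rw [hμ]; linarith
  have hμroot : μ ^ 2 - ((n : ℝ) + 3) * μ + (6 * (n : ℝ) - 36) = 0 := by
    rw [hμ]; linear_combination (1 / 4 : ℝ) * hs2 + (1 / 4 : ℝ) * hD
  set r : ℝ := Real.sqrt μ with hr
  have hr2 : r ^ 2 = μ := Real.sq_sqrt hμpos.le
  have hrpos : 0 < r := Real.sqrt_pos.mpr hμpos
  have hcast : ((n - 6 : ℕ) : ℝ) = (n : ℝ) - 6 := by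
    have h6 : (6 : ℕ) ≤ n := by omega
    push_cast [h6]; ring
  set x : Fin n → ℝ := fun j =>
    if j.val = 0 then r * (r ^ 2 - 6) else if j.val < 3 then 3 * r
    else if j.val < 6 then r ^ 2 else r ^ 2 - 6 with hx
  have hx0 : x ⟨0, by omega⟩ = r * (r ^ 2 - 6) := by simp [hx]
  have hx1 : x ⟨1, by omega⟩ = 3 * r := by simp [hx]
  have hx2 : x ⟨2, by omega⟩ = 3 * r := by simp [hx]
  have hx3 : x ⟨3, by omega⟩ = r ^ 2 := by simp [hx]
  have hx4 : x ⟨4, by omega⟩ = r ^ 2 := by simp [hx]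
  have hx5 : x ⟨5, by omega⟩ = r ^ 2 := by simp [hx]
  have hmem : r ∈ {t : ℝ | ∃ y : Fin n → ℝ, y ≠ 0 ∧ (adjMat (K33Star n)).mulVec y = t • y} := by
    refine ⟨x, ?_, ?_⟩
    · intro h0
      have h3 := congrFun h0 ⟨3, by omega⟩
      rw [hx3] at h3
      simp at h3
      exact absurd h3 (ne_of_gt hrpos)
    · funext i
      have hsmul : (r • x) i = r * x i := rfl
      rcases Nat.lt_or_ge i.val 6 with h6 | h6
      · rcases Nat.lt_or_ge i.val 3 with h3 | h3
        · rcases Nat.eq_zero_or_pos i.val with h0 | h0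
          · rw [mvA n hn x i h0, hsmul, hx3, hx4, hx5]
            have hxi : x i = r * (r ^ 2 - 6) := by simp [hx, h0]
            have hval : ∀ j ∈ univ.filter (fun j : Fin n => 6 ≤ j.val),
                x j = r ^ 2 - 6 := by
              intro j hj
              simp only [Finset.mem_filter] at hj
              simp only [hx]
              rw [if_neg (by omega), if_neg (by omega), if_neg (by omega)]
            have hsum : ∑ j ∈ univ.filter (fun j : Fin n => 6 ≤ j.val), x j
                = ((n : ℝ) - 6) * (r ^ 2 - 6) := by
              rw [Finset.sum_congr rfl hval, Finset.sum_const, card_F6 n hn,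
                nsmul_eq_mul, hcast]
            rw [hsum, hxi]
            linear_combination (-(r ^ 2) - μ + ((n : ℝ) + 3)) * hr2 - hμroot
          · rw [mvB n hn x i h0 h3, hsmul, hx3, hx4, hx5]
            have hxi : x i = 3 * r := by
              simp only [hx]
              rw [if_neg (by omega), if_pos h3]
            rw [hxi]; ring
        · rw [mvC n hn x i h3 h6, hsmul, hx0, hx1, hx2]
          have hxi : x i = r ^ 2 := by
            simp only [hx]
            rw [if_neg (by omega), if_neg (by omega), if_pos h6]
          rw [hxi]; ring
      · rw [mvD n hn x i h6, hsmul, hx0]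
        have hxi : x i = r ^ 2 - 6 := by
          simp only [hx]
          rw [if_neg (by omega), if_neg (by omega), if_neg (by omega)]
        rw [hxi]
  -- upper bound
  have hub : ∀ t ∈ {t : ℝ | ∃ y : Fin n → ℝ, y ≠ 0 ∧ (adjMat (K33Star n)).mulVec y = t • y},
      t ≤ r := by
    rintro t ⟨y, hy0, hmv⟩
    rcases le_or_gt t 0 with ht0 | ht0
    · exact ht0.trans hrpos.le
    have heq : ∀ i : Fin n, (adjMat (K33Star n)).mulVec y i = t * y i := by
      intro i; rw [hmv]; rfl
    have hleaf : ∀ i : Fin n, 6 ≤ i.val → y i = y ⟨0, by omega⟩ / t := by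
      intro i hi
      have h' := (heq i).symm.trans (mvD n hn y i hi)
      field_simp
      linarith [h']
    have hb1 : t * y ⟨1, by omega⟩ = y ⟨3, by omega⟩ + y ⟨4, by omega⟩ + y ⟨5, by omega⟩ := by
      rw [← heq ⟨1, by omega⟩]; exact mvB n hn y _ (by norm_num) (by norm_num)
    have hb2 : t * y ⟨2, by omega⟩ = y ⟨3, by omega⟩ + y ⟨4, by omega⟩ + y ⟨5, by omega⟩ := by
      rw [← heq ⟨2, by omega⟩]; exact mvB n hn y _ (by norm_num) (by norm_num)
    have hc3 : t * y ⟨3, by omega⟩ = y ⟨0, by omega⟩ + y ⟨1, by omega⟩ + y ⟨2, by omega⟩ := by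
      rw [← heq ⟨3, by omega⟩]; exact mvC n hn y _ (by norm_num) (by norm_num)
    have hc4 : t * y ⟨4, by omega⟩ = y ⟨0, by omega⟩ + y ⟨1, by omega⟩ + y ⟨2, by omega⟩ := by
      rw [← heq ⟨4, by omega⟩]; exact mvC n hn y _ (by norm_num) (by norm_num)
    have hc5 : t * y ⟨5, by omega⟩ = y ⟨0, by omega⟩ + y ⟨1, by omega⟩ + y ⟨2, by omega⟩ := by
      rw [← heq ⟨5, by omega⟩]; exact mvC n hn y _ (by norm_num) (by norm_num)
    have hy4 : y ⟨4, by omega⟩ = y ⟨3, by omega⟩ :=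
      mul_left_cancel₀ (ne_of_gt ht0) (hc4.trans hc3.symm)
    have hy5 : y ⟨5, by omega⟩ = y ⟨3, by omega⟩ :=
      mul_left_cancel₀ (ne_of_gt ht0) (hc5.trans hc3.symm)
    have hsum : ∑ j ∈ univ.filter (fun j : Fin n => 6 ≤ j.val), y j
        = ((n : ℝ) - 6) * (y ⟨0, by omega⟩ / t) := by
      rw [Finset.sum_congr rfl (fun j hj => hleaf j (by simpa using hj)),
        Finset.sum_const, card_F6 n hn, nsmul_eq_mul, hcast]
    have haeq : t * y ⟨0, by omega⟩
        = 3 * y ⟨3, by omega⟩ + ((n : ℝ) - 6) * (y ⟨0, by omega⟩ / t) := by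
      have h' := (heq ⟨0, by omega⟩).symm.trans (mvA n hn y ⟨0, by omega⟩ rfl)
      rw [hsum, hy4, hy5] at h'
      linarith [h']
    have hy1 : t * y ⟨1, by omega⟩ = 3 * y ⟨3, by omega⟩ := by rw [hb1, hy4, hy5]; ring
    have hy2 : t * y ⟨2, by omega⟩ = 3 * y ⟨3, by omega⟩ := by rw [hb2, hy4, hy5]; ring
    have e1 : t ^ 2 * y ⟨3, by omega⟩ = t * y ⟨0, by omega⟩ + 6 * y ⟨3, by omega⟩ := by
      have h' : t * (t * y ⟨3, by omega⟩)
          = t * y ⟨0, by omega⟩ + t * y ⟨1, by omega⟩ + t * y ⟨2, by omega⟩ := by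
        rw [hc3]; ring
      rw [hy1, hy2] at h'
      linear_combination h'
    have e2 : t ^ 2 * y ⟨0, by omega⟩
        = 3 * (t * y ⟨3, by omega⟩) + ((n : ℝ) - 6) * y ⟨0, by omega⟩ := by
      have h' : t * (t * y ⟨0, by omega⟩)
          = 3 * (t * y ⟨3, by omega⟩) + ((n : ℝ) - 6) * (t * (y ⟨0, by omega⟩ / t)) := by
        rw [haeq]; ring
      rw [mul_div_cancel₀ _ (ne_of_gt ht0)] at h'
      linear_combination h'
    have hcne : y ⟨3, by omega⟩ ≠ 0 := by
      intro hc0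
      have ha0 : y ⟨0, by omega⟩ = 0 := by
        have h' : t * y ⟨0, by omega⟩ = 0 := by linear_combination (t ^ 2 - 6) * hc0 - e1
        exact (mul_eq_zero.mp h').resolve_left (ne_of_gt ht0)
      apply hy0
      funext j
      show y j = 0
      have hz1 : y (⟨1, by omega⟩ : Fin n) = 0 := by
        have h' : t * y (⟨1, by omega⟩ : Fin n) = 0 := by rw [hy1, hc0]; ring
        exact (mul_eq_zero.mp h').resolve_left (ne_of_gt ht0)
      have hz2 : y (⟨2, by omega⟩ : Fin n) = 0 := by
        have h' : t * y (⟨2, by omega⟩ : Fin n) = 0 := by rw [hy2, hc0]; ring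
        exact (mul_eq_zero.mp h').resolve_left (ne_of_gt ht0)
      rcases Nat.lt_or_ge j.val 6 with h6 | h6
      · have hj : j = (⟨0, by omega⟩ : Fin n) ∨ j = (⟨1, by omega⟩ : Fin n)
            ∨ j = (⟨2, by omega⟩ : Fin n) ∨ j = (⟨3, by omega⟩ : Fin n)
            ∨ j = (⟨4, by omega⟩ : Fin n) ∨ j = (⟨5, by omega⟩ : Fin n) := by
          rcases Nat.lt_or_ge j.val 1 with h | h
          · exact Or.inl (Fin.ext (show j.val = 0 by omega))
          rcases Nat.lt_or_ge j.val 2 with h' | h'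
          · exact Or.inr (Or.inl (Fin.ext (show j.val = 1 by omega)))
          rcases Nat.lt_or_ge j.val 3 with h'' | h''
          · exact Or.inr (Or.inr (Or.inl (Fin.ext (show j.val = 2 by omega))))
          rcases Nat.lt_or_ge j.val 4 with h3 | h3
          · exact Or.inr (Or.inr (Or.inr (Or.inl (Fin.ext (show j.val = 3 by omega)))))
          rcases Nat.lt_or_ge j.val 5 with h4 | h4
          · exact Or.inr (Or.inr (Or.inr (Or.inr (Or.inl
              (Fin.ext (show j.val = 4 by omega))))))
          · exact Or.inr (Or.inr (Or.inr (Or.inr (Or.inr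
              (Fin.ext (show j.val = 5 by omega))))))
        rcases hj with h | h | h | h | h | h <;> rw [h]
        · exact ha0
        · exact hz1
        · exact hz2
        · exact hc0
        · rw [hy4]; exact hc0
        · rw [hy5]; exact hc0
      · rw [hleaf j h6, ha0]; simp
    have key : t ^ 4 - ((n : ℝ) + 3) * t ^ 2 + (6 * (n : ℝ) - 36) = 0 := by
      have hq : (t ^ 4 - ((n : ℝ) + 3) * t ^ 2 + (6 * (n : ℝ) - 36)) * y ⟨3, by omega⟩ = 0 := by
        linear_combination (t ^ 2 - ((n : ℝ) - 6)) * e1 + t * e2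
      exact (mul_eq_zero.mp hq).resolve_right hcne
    have hsq : (2 * t ^ 2 - ((n : ℝ) + 3)) ^ 2 = D := by
      rw [hD]; linear_combination (4 : ℝ) * key
    have hfac : (2 * t ^ 2 - ((n : ℝ) + 3) - s) * (2 * t ^ 2 - ((n : ℝ) + 3) + s) = 0 := by
      linear_combination hsq - hs2
    have htle : t ^ 2 ≤ μ := by
      rcases mul_eq_zero.mp hfac with h | h
      · rw [hμ]; linarith
      · rw [hμ]; linarith
    calc t = Real.sqrt (t ^ 2) := (Real.sqrt_sq ht0.le).symm
      _ ≤ Real.sqrt μ := Real.sqrt_le_sqrt htle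
      _ = r := rfl
  have hbdd : BddAbove {t : ℝ | ∃ y : Fin n → ℝ, y ≠ 0 ∧ (adjMat (K33Star n)).mulVec y = t • y} :=
    ⟨r, hub⟩
  have hspec : specRad (K33Star n) = r := by
    apply le_antisymm
    · exact csSup_le ⟨r, hmem⟩ hub
    · exact le_csSup hbdd hmem
  constructor
  · rw [hspec, hr2]
  · rw [hspec, hr2, hμ]
    have hslt : s < (n : ℝ) - 5 := by
      rw [hs]
      rw [show ((n : ℝ) - 5) = Real.sqrt (((n : ℝ) - 5) ^ 2) from (Real.sqrt_sq (by linarith)).symm]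
      apply Real.sqrt_lt_sqrt hDnn
      nlinarith
    linarith
end

section
/- Let G be a connected graph with Perron eigenvector X for ρ(G), and let u, v be vertices with x_u ≥ x_v. Let G' be obtained from G by deleting all edges vw with w ∈ N(v)\N(u), w ≠ u, and adding edges uw for these w, assuming this set is nonempty. Then ρ(G') > ρ(G). -/
/-! The Perron vector `X` of `G` is a test vector for `G'`. Moving the edges `vw` (`w ∈ S`) to
`uw` is a symmetric rank-two update of the adjacency matrix which changes the quadratic form
`Xᵀ A X` by `2 (X u - X v) ∑_{w ∈ S} X w ≥ 0`; since `ρ(G') I - A(G')` is positive semidefinite,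
this gives `ρ(G) ≤ ρ(G')`. In case of equality `X` lies in the kernel of that semidefinite
matrix, i.e. it is an eigenvector of `G'` for `ρ(G')`, which fails at `v`: there
`(A(G') X) v = ρ(G) X v - ∑_{w ∈ S} X w`. -/

open Matrix

lemma Matrix.mem_spectrum_iff_exists_mulVec_eq_smul {K n : Type*} [Field K] [Fintype n]
    [DecidableEq n] (A : Matrix n n K) (t : K) :
    t ∈ spectrum K A ↔ ∃ x : n → K, x ≠ 0 ∧ A *ᵥ x = t • x := by
  rw [← spectrum_toLin', ← Module.End.hasEigenvalue_iff_mem_spectrum]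
  constructor
  · intro h
    obtain ⟨x, hx⟩ := h.exists_hasEigenvector
    exact ⟨x, hx.2, by simpa using hx.apply_eq_smul⟩
  · rintro ⟨x, hx0, hx⟩
    exact Module.End.hasEigenvalue_of_hasEigenvector
      ⟨Module.End.mem_eigenspace_iff.2 (by simpa using hx), hx0⟩

lemma Matrix.IsHermitian.posSemidef_sSup_spectrum_smul_one_sub {n : Type*} [Fintype n]
    [DecidableEq n] {A : Matrix n n ℝ} (hA : A.IsHermitian) :
    (sSup (spectrum ℝ A) • (1 : Matrix n n ℝ) - A).PosSemidef := by
  refine posSemidef_iff_isHermitian_and_spectrum_nonneg.2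
    ⟨(isHermitian_one.smul (IsSelfAdjoint.all _)).sub hA, ?_⟩
  rw [← Algebra.algebraMap_eq_smul_one, ← spectrum.singleton_sub_eq]
  rintro _ ⟨_, rfl, t, ht, rfl⟩
  exact sub_nonneg.2 (le_csSup A.finite_spectrum.bddAbove ht)

lemma Matrix.dotProduct_smul_one_sub_mulVec {n R : Type*} [Fintype n] [DecidableEq n]
    [CommRing R] (c : R) (A : Matrix n n R) (x : n → R) :
    x ⬝ᵥ (c • (1 : Matrix n n R) - A) *ᵥ x = c * (x ⬝ᵥ x) - x ⬝ᵥ A *ᵥ x := by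
  rw [sub_mulVec, smul_mulVec, one_mulVec, dotProduct_sub, dotProduct_smul, smul_eq_mul]

section Spectral

variable {V : Type*} [Fintype V] (G : SimpleGraph V)

lemma adjMat_isHermitian : (adjMat G).IsHermitian := by
  classical
  ext i j
  simp only [conjTranspose_apply, adjMat, of_apply, star_trivial]
  exact if_congr (G.adj_comm j i) rfl rfl

lemma specRad_eq_sSup_spectrum [DecidableEq V] : specRad G = sSup (spectrum ℝ (adjMat G)) := by
  unfold specRad
  congr 1
  ext t
  exact (mem_spectrum_iff_exists_mulVec_eq_smul _ t).symm

lemma posSemidef_specRad_smul_one_sub_adjMat [DecidableEq V] :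
    (specRad G • (1 : Matrix V V ℝ) - adjMat G).PosSemidef := by
  rw [specRad_eq_sSup_spectrum]
  exact (adjMat_isHermitian G).posSemidef_sSup_spectrum_smul_one_sub

lemma dotProduct_adjMat_mulVec_le_specRad_mul (x : V → ℝ) :
    x ⬝ᵥ adjMat G *ᵥ x ≤ specRad G * (x ⬝ᵥ x) := by
  classical
  have h := (posSemidef_specRad_smul_one_sub_adjMat G).dotProduct_mulVec_nonneg x
  rw [star_trivial, dotProduct_smul_one_sub_mulVec] at h
  linarith

lemma adjMat_mulVec_eq_specRad_smul_of_dotProduct_eq {x : V → ℝ}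
    (hx : x ⬝ᵥ adjMat G *ᵥ x = specRad G * (x ⬝ᵥ x)) : adjMat G *ᵥ x = specRad G • x := by
  classical
  have h := (posSemidef_specRad_smul_one_sub_adjMat G).dotProduct_mulVec_zero_iff x
  rw [star_trivial, dotProduct_smul_one_sub_mulVec, hx, sub_self, sub_mulVec, smul_mulVec,
    one_mulVec, sub_eq_zero] at h
  exact (h.1 rfl).symm

end Spectral

section NeighborShift

variable {V : Type*}

structure IsNeighborShift (G G' : SimpleGraph V) (u v : V) (S : Set V) : Prop where
  adj_v : ∀ w ∈ S, G.Adj v w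
  not_adj_u : ∀ w ∈ S, ¬ G.Adj u w
  ne_u : ∀ w ∈ S, w ≠ u
  adj_iff : ∀ a b, G'.Adj a b ↔
    ((G.Adj a b ∧ ¬(a = v ∧ b ∈ S) ∧ ¬(b = v ∧ a ∈ S)) ∨ (a = u ∧ b ∈ S) ∨ (b = u ∧ a ∈ S))

namespace IsNeighborShift

variable {G G' : SimpleGraph V} {u v : V} {S : Set V}

lemma notMem_v (h : IsNeighborShift G G' u v S) : v ∉ S := fun hv => (h.adj_v v hv).ne rfl

variable [Fintype V]

lemma adjMat_eq [DecidableEq V] (h : IsNeighborShift G G' u v S) :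
    adjMat G' = adjMat G + vecMulVec (Pi.single u 1 - Pi.single v 1) (S.indicator 1)
      + vecMulVec (S.indicator 1) (Pi.single u 1 - Pi.single v 1) := by
  classical
  ext a b
  simp only [adjMat, Matrix.add_apply, of_apply, vecMulVec_apply, Pi.sub_apply, Pi.single_apply,
    Set.indicator_apply, Pi.one_apply, h.adj_iff]
  split_ifs <;> grind [G.adj_symm, h.adj_v, h.not_adj_u, h.ne_u, h.notMem_v]

lemma adjMat_mulVec [DecidableEq V] (h : IsNeighborShift G G' u v S) (x : V → ℝ) :
    adjMat G' *ᵥ x = adjMat G *ᵥ x + (S.indicator 1 ⬝ᵥ x) • (Pi.single u 1 - Pi.single v 1)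
      + (x u - x v) • S.indicator 1 := by
  rw [h.adjMat_eq, add_mulVec, add_mulVec, vecMulVec_mulVec, vecMulVec_mulVec, op_smul_eq_smul,
    op_smul_eq_smul, sub_dotProduct, single_dotProduct, single_dotProduct, one_mul, one_mul]

lemma dotProduct_adjMat_mulVec (h : IsNeighborShift G G' u v S) (x : V → ℝ) :
    x ⬝ᵥ adjMat G' *ᵥ x = x ⬝ᵥ adjMat G *ᵥ x + 2 * (x u - x v) * (S.indicator 1 ⬝ᵥ x) := by
  classical
  rw [h.adjMat_mulVec, dotProduct_add, dotProduct_add, dotProduct_smul, dotProduct_smul,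
    dotProduct_sub, dotProduct_single, dotProduct_single, dotProduct_comm x (S.indicator 1),
    smul_eq_mul, smul_eq_mul]
  ring

lemma adjMat_mulVec_apply_v (h : IsNeighborShift G G' u v S) (huv : u ≠ v) (x : V → ℝ) :
    (adjMat G' *ᵥ x) v = (adjMat G *ᵥ x) v - S.indicator 1 ⬝ᵥ x := by
  classical
  simp [h.adjMat_mulVec, huv.symm, h.notMem_v, sub_eq_add_neg]

end IsNeighborShift

end NeighborShift

lemma indicator_dotProduct_pos {V : Type*} [Fintype V] {S : Set V} (hS : S.Nonempty)
    {x : V → ℝ} (hx : ∀ w, 0 < x w) : 0 < S.indicator 1 ⬝ᵥ x := by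
  classical
  obtain ⟨w, hw⟩ := hS
  refine Finset.sum_pos' (fun a _ => mul_nonneg (Set.indicator_nonneg (fun _ _ => zero_le_one) a)
    (hx a).le) ⟨w, Finset.mem_univ w, ?_⟩
  simpa [Set.indicator_of_mem hw] using hx w

theorem stmt9_general {V : Type*} [Fintype V] (G : SimpleGraph V)
    (X : V → ℝ) (hXpos : ∀ w, 0 < X w) (hX : (adjMat G).mulVec X = specRad G • X)
    (u v : V) (huv : X v ≤ X u)
    (S : Set V) (hS : S = {w | G.Adj v w ∧ ¬ G.Adj u w ∧ w ≠ u}) (hSne : S.Nonempty)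
    (G' : SimpleGraph V)
    (hG' : ∀ a b, G'.Adj a b ↔
      ((G.Adj a b ∧ ¬(a = v ∧ b ∈ S) ∧ ¬(b = v ∧ a ∈ S)) ∨
        (a = u ∧ b ∈ S) ∨ (b = u ∧ a ∈ S))) :
    specRad G < specRad G' := by
  have hshift : IsNeighborShift G G' u v S :=
    ⟨fun w hw => (hS ▸ hw).1, fun w hw => (hS ▸ hw).2.1, fun w hw => (hS ▸ hw).2.2, hG'⟩
  have hu_ne_v : u ≠ v := by
    rintro rfl
    obtain ⟨w, hw⟩ := hSne
    exact hshift.not_adj_u w hw (hshift.adj_v w hw)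
  have hσ := indicator_dotProduct_pos hSne hXpos
  have hXX : 0 < X ⬝ᵥ X := Finset.sum_pos (fun w _ => mul_pos (hXpos w) (hXpos w))
    ⟨u, Finset.mem_univ u⟩
  have hquad : X ⬝ᵥ adjMat G' *ᵥ X
      = specRad G * (X ⬝ᵥ X) + 2 * (X u - X v) * (S.indicator 1 ⬝ᵥ X) := by
    rw [hshift.dotProduct_adjMat_mulVec, hX, dotProduct_smul, smul_eq_mul]
  have hgain : specRad G * (X ⬝ᵥ X) ≤ X ⬝ᵥ adjMat G' *ᵥ X := by
    rw [hquad]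
    linarith [mul_nonneg (mul_nonneg zero_le_two (sub_nonneg.2 huv)) hσ.le]
  have hle : specRad G ≤ specRad G' :=
    le_of_mul_le_mul_right (hgain.trans (dotProduct_adjMat_mulVec_le_specRad_mul G' X)) hXX
  refine hle.lt_of_ne fun heq => ?_
  have hrow := congrFun (adjMat_mulVec_eq_specRad_smul_of_dotProduct_eq G'
    (le_antisymm (dotProduct_adjMat_mulVec_le_specRad_mul G' X) (heq ▸ hgain))) v
  rw [hshift.adjMat_mulVec_apply_v hu_ne_v, hX, ← heq] at hrow
  simp only [Pi.smul_apply, smul_eq_mul, sub_eq_self] at hrow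
  exact hσ.ne' hrow

theorem stmt9 {V : Type*} [Fintype V] (G : SimpleGraph V) (hG : G.Connected)
    (X : V → ℝ) (hXpos : ∀ w, 0 < X w) (hX : (adjMat G).mulVec X = specRad G • X)
    (u v : V) (huv : X v ≤ X u)
    (S : Set V) (hS : S = {w | G.Adj v w ∧ ¬ G.Adj u w ∧ w ≠ u}) (hSne : S.Nonempty)
    (G' : SimpleGraph V)
    (hG' : ∀ a b, G'.Adj a b ↔
      ((G.Adj a b ∧ ¬(a = v ∧ b ∈ S) ∧ ¬(b = v ∧ a ∈ S)) ∨
        (a = u ∧ b ∈ S) ∨ (b = u ∧ a ∈ S))) :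
    specRad G < specRad G' :=
  stmt9_general G X hXpos hX u v huv S hS hSne G' hG'
end

section
/- Let G be a graph containing no two cycles of the same length, and u a vertex of G. Then the induced subgraph on N(u) has at most 1 edge, and the number of edges between N(u) and the second neighborhood N²(u) is at most |N²(u)| + 1. -/
section Helpers14
open SimpleGraph Walk Finset

lemma tri_cycle' {V : Type*} {G : SimpleGraph V} {u a b : V}
    (hua : G.Adj u a) (hab : G.Adj a b) (hbu : G.Adj b u) :
    (Walk.cons hua (Walk.cons hab (Walk.cons hbu Walk.nil))).IsCycle := by
  have h1 := hua.ne; have h2 := hab.ne; have h3 := hbu.ne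
  constructor
  · constructor
    · simp [Walk.isTrail_def, Sym2.eq_iff]; aesop
    · simp
  · simp [List.nodup_cons]; aesop

lemma four_cycle' {V : Type*} {G : SimpleGraph V} {u a v b : V}
    (hua : G.Adj u a) (hav : G.Adj a v) (hvb : G.Adj v b) (hbu : G.Adj b u)
    (huv : u ≠ v) (hab : a ≠ b) :
    (Walk.cons hua (Walk.cons hav (Walk.cons hvb (Walk.cons hbu Walk.nil)))).IsCycle := by
  have h1 := hua.ne; have h2 := hav.ne; have h3 := hvb.ne; have h4 := hbu.ne
  constructor
  · constructor
    · simp [Walk.isTrail_def, Sym2.eq_iff]; aesop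
    · simp
  · simp [List.nodup_cons, Sym2.eq_iff]; aesop

lemma two_four_cycles {V : Type*} [DecidableEq V] {G : SimpleGraph V} {u a v b c w d : V}
    (hav : G.Adj a v) (hbv : G.Adj b v) (hcw : G.Adj c w) (hdw : G.Adj d w)
    (hua : G.Adj u a) (hub : G.Adj u b) (huc : G.Adj u c) (hud : G.Adj u d)
    (huv : u ≠ v) (huw : u ≠ w) (hab : a ≠ b) (hcd : c ≠ d)
    (hvc : v ≠ c) (hvd : v ≠ d) (hvw : v = w → b ≠ c ∧ b ≠ d) :
    HasTwoCyclesSameLength G := by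
  refine ⟨u, u, Walk.cons hua (Walk.cons hav (Walk.cons (hbv.symm) (Walk.cons hub.symm Walk.nil))),
    Walk.cons huc (Walk.cons hcw (Walk.cons (hdw.symm) (Walk.cons hud.symm Walk.nil))),
    four_cycle' _ _ _ _ huv hab, four_cycle' _ _ _ _ huw hcd, rfl, ?_⟩
  intro heq
  have hmem : s(v, b) ∈ (Walk.cons huc (Walk.cons hcw (Walk.cons (hdw.symm)
      (Walk.cons hud.symm Walk.nil)))).edges.toFinset := by
    rw [← heq]; simp [Walk.edges]
  rw [List.mem_toFinset] at hmem
  simp only [Walk.edges_cons, Walk.edges_nil, List.mem_cons, List.not_mem_nil, or_false,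
    Sym2.eq_iff] at hmem
  obtain (⟨rfl, _⟩ | ⟨rfl, _⟩) | (⟨rfl, rfl⟩ | ⟨rfl, rfl⟩) | (⟨rfl, rfl⟩ | ⟨rfl, rfl⟩) |
    (⟨rfl, _⟩ | ⟨rfl, _⟩) := hmem
  · exact huv rfl
  · exact hvc rfl
  · exact hvc rfl
  · exact (hvw rfl).1 rfl
  · exact (hvw rfl).2 rfl
  · exact hvd rfl
  · exact hvd rfl
  · exact huv rfl

lemma two_triangles {V : Type*} [DecidableEq V] {G : SimpleGraph V} {u a b c d : V}
    (hua : G.Adj u a) (hub : G.Adj u b) (huc : G.Adj u c) (hud : G.Adj u d)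
    (hab : G.Adj a b) (hcd : G.Adj c d) (hne : s(a,b) ≠ s(c,d)) :
    HasTwoCyclesSameLength G := by
  refine ⟨u, u, Walk.cons hua (Walk.cons hab (Walk.cons hub.symm Walk.nil)),
    Walk.cons huc (Walk.cons hcd (Walk.cons hud.symm Walk.nil)),
    tri_cycle' _ _ _, tri_cycle' _ _ _, rfl, ?_⟩
  intro heq
  have hmem : s(a, b) ∈ (Walk.cons huc (Walk.cons hcd (Walk.cons hud.symm Walk.nil))).edges.toFinset := by
    rw [← heq]; simp [Walk.edges]
  rw [List.mem_toFinset] at hmem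
  have h1 := hua.ne'; have h2 := hub.ne'
  simp only [Walk.edges_cons, Walk.edges_nil, List.mem_cons, List.not_mem_nil, or_false,
    Sym2.eq_iff] at hmem
  rcases hmem with (⟨rfl, _⟩ | ⟨_, rfl⟩) | hm | (⟨_, rfl⟩ | ⟨rfl, _⟩)
  · exact h1 rfl
  · exact h2 rfl
  · exact hne (by rw [Sym2.eq_iff]; tauto)
  · exact h2 rfl
  · exact h1 rfl
end Helpers14

open Classical in
theorem stmt14 {V : Type*} [Fintype V] [DecidableEq V] (G : SimpleGraph V)
    [DecidableRel G.Adj] (h : ¬ HasTwoCyclesSameLength G) (u : V) :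
    (G.edgeFinset.filter (fun e => ∀ x ∈ e, G.Adj u x)).card ≤ 1 ∧
    (((G.neighborFinset u) ×ˢ (Finset.univ.filter (fun v : V => G.dist u v = 2))).filter
        (fun p => G.Adj p.1 p.2)).card
      ≤ (Finset.univ.filter (fun v : V => G.dist u v = 2)).card + 1 := by
  constructor
  · by_contra hc
    push_neg at hc
    obtain ⟨e₁, he₁, e₂, he₂, hne⟩ := Finset.one_lt_card.mp hc
    obtain ⟨⟨a₁, b₁⟩, rfl⟩ := e₁.exists_rep
    obtain ⟨⟨a₂, b₂⟩, rfl⟩ := e₂.exists_rep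
    simp only [Finset.mem_filter, SimpleGraph.mem_edgeFinset, Sym2.mem_iff, forall_eq_or_imp, forall_eq]
      at he₁ he₂
    obtain ⟨hab₁, hua₁, hub₁⟩ := he₁
    obtain ⟨hab₂, hua₂, hub₂⟩ := he₂
    rw [SimpleGraph.mem_edgeSet] at hab₁ hab₂
    exact h (two_triangles hua₁ hub₁ hua₂ hub₂ hab₁ hab₂ hne)
  · set S := Finset.univ.filter (fun v : V => G.dist u v = 2) with hS
    set P := ((G.neighborFinset u) ×ˢ S).filter (fun p => G.Adj p.1 p.2) with hP
    by_contra hc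
    push_neg at hc
    have hSfact : ∀ v ∈ S, v ≠ u ∧ ¬ G.Adj u v := by
      intro v hv
      rw [hS, Finset.mem_filter] at hv
      refine ⟨?_, ?_⟩
      · rintro rfl; simp [SimpleGraph.dist_self] at hv
      · intro ha
        rw [← SimpleGraph.dist_eq_one_iff_adj] at ha
        omega
    have hPmem : ∀ p ∈ P, G.Adj u p.1 ∧ p.2 ∈ S ∧ G.Adj p.1 p.2 := by
      intro p hp
      rw [hP, Finset.mem_filter, Finset.mem_product, SimpleGraph.mem_neighborFinset] at hp
      exact ⟨hp.1.1, hp.1.2, hp.2⟩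
    have hsum : P.card = ∑ v ∈ S, (P.filter (fun p => p.2 = v)).card :=
      Finset.card_eq_sum_card_fiberwise (fun p hp => (hPmem p hp).2.1)
    have hfib : ∀ v, ∀ p ∈ P.filter (fun p => p.2 = v),
        G.Adj u p.1 ∧ G.Adj p.1 v ∧ p = (p.1, v) := by
      intro v p hp
      rw [Finset.mem_filter] at hp
      obtain ⟨hp1, hp2⟩ := hp
      obtain ⟨h1, _, h3⟩ := hPmem p hp1
      exact ⟨h1, hp2 ▸ h3, by rw [← hp2]⟩
    -- find v ∈ S with fiber ≥ 2
    have hex : ∃ v ∈ S, 2 ≤ (P.filter (fun p => p.2 = v)).card := by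
      by_contra hno
      push_neg at hno
      have : P.card ≤ ∑ _v ∈ S, 1 :=
        hsum ▸ Finset.sum_le_sum (fun v hv => Nat.le_of_lt_succ (hno v hv))
      simp at this
      omega
    obtain ⟨v, hvS, hv2⟩ := hex
    obtain ⟨hvu, hvadj⟩ := hSfact v hvS
    by_cases h3 : 3 ≤ (P.filter (fun p => p.2 = v)).card
    · obtain ⟨p, hp, q, hq, r, hr, hpq, hpr, hqr⟩ := Finset.two_lt_card.mp h3
      obtain ⟨hup, hpv, hpe⟩ := hfib v p hp
      obtain ⟨huq, hqv, hqe⟩ := hfib v q hq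
      obtain ⟨hur, hrv, hre⟩ := hfib v r hr
      have hxy : p.1 ≠ q.1 := fun he => hpq (by rw [hpe, hqe, he])
      have hxz : p.1 ≠ r.1 := fun he => hpr (by rw [hpe, hre, he])
      have hyz : q.1 ≠ r.1 := fun he => hqr (by rw [hqe, hre, he])
      have hvp : v ≠ p.1 := fun he => hvadj (he ▸ hup)
      have hvr : v ≠ r.1 := fun he => hvadj (he ▸ hur)
      exact h (two_four_cycles hpv hqv hpv hrv hup huq hup hur
        (Ne.symm hvu) (Ne.symm hvu) hxy hxz hvp hvr
        (fun _ => ⟨Ne.symm hxy, hyz⟩))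
    · push_neg at h3
      have herase : ∃ w ∈ S.erase v, 2 ≤ (P.filter (fun p => p.2 = w)).card := by
        by_contra hno
        push_neg at hno
        have hsum2 : ∑ w ∈ S.erase v, (P.filter (fun p => p.2 = w)).card ≤
            ∑ _w ∈ S.erase v, 1 :=
          Finset.sum_le_sum (fun w hw => Nat.le_of_lt_succ (hno w hw))
        have hadd := Finset.add_sum_erase S (fun w => (P.filter (fun p => p.2 = w)).card) hvS
        have hcard := Finset.card_erase_of_mem hvS
        have hSpos : 1 ≤ S.card := Finset.card_pos.mpr ⟨v, hvS⟩
        beta_reduce at hadd hsum2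
        simp only [Finset.sum_const, smul_eq_mul, mul_one] at hsum2
        omega
      obtain ⟨w, hwE, hw2⟩ := herase
      have hwv : w ≠ v := (Finset.mem_erase.mp hwE).1
      have hwS : w ∈ S := (Finset.mem_erase.mp hwE).2
      obtain ⟨hwu, hwadj⟩ := hSfact w hwS
      obtain ⟨p, hp, q, hq, hpq⟩ := Finset.one_lt_card.mp hv2
      obtain ⟨r, hr, t, ht, hrt⟩ := Finset.one_lt_card.mp hw2
      obtain ⟨hup, hpv, hpe⟩ := hfib v p hp
      obtain ⟨huq, hqv, hqe⟩ := hfib v q hq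
      obtain ⟨hur, hrw, hre⟩ := hfib w r hr
      obtain ⟨hut, htw, hte⟩ := hfib w t ht
      have hab : p.1 ≠ q.1 := fun he => hpq (by rw [hpe, hqe, he])
      have hcd : r.1 ≠ t.1 := fun he => hrt (by rw [hre, hte, he])
      have hvr : v ≠ r.1 := fun he => hvadj (he ▸ hur)
      have hvt : v ≠ t.1 := fun he => hvadj (he ▸ hut)
      exact h (two_four_cycles hpv hqv hrw htw hup huq hur hut
        (Ne.symm hvu) (Ne.symm hwu) hab hcd hvr hvt
        (fun hvw => absurd hvw.symm hwv))
end

section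
/- Let G be a graph without two edge-disjoint cycles, v a non-cut vertex of G with four distinct neighbors u₁,u₂,u₃,u₄. Then there is no pair of paths P₁ from u₁ to u₄ and P₂ from u₂ to u₃, both avoiding v. Equivalently: if v is a non-cut vertex of a graph G and d(v) ≥ 4, then G contains two edge-disjoint cycles. -/
/-!
Pick distinct neighbours `a, b, c, d` of `v`. As `v` is not a cut vertex, there are paths
`P : a ⟶ b` and `Q : c ⟶ d` avoiding `v`. Any two edge-disjoint walks avoiding `v` that pair up
the four neighbours close up through `v` into two edge-disjoint cycles. If `P` and `Q` share no
vertex this applies to `P` and `Q` themselves. Otherwise let `x` and `y` be the first and the last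
vertex of `Q` on `P`: the pieces `c ⟶ x` and `y ⟶ d` of `Q` meet `P` only at their ends, and,
depending on the order of `x` and `y` along `P`, they prolong the two end pieces of `P` to
edge-disjoint walks `a ⟶ c`, `b ⟶ d` or `a ⟶ d`, `b ⟶ c`.
-/

namespace SimpleGraph

variable {V : Type*} {G : SimpleGraph V}

namespace Walk

theorem exists_append_eq_of_exists_mem_support (K : Set V) {c d : V} (Q : G.Walk c d)
    (h : ∃ y ∈ Q.support, y ∈ K) :
    ∃ (x : V) (S : G.Walk c x) (R : G.Walk x d),
      S.append R = Q ∧ x ∈ K ∧ ∀ w ∈ S.support, w ∈ K → w = x := by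
  induction Q with
  | nil =>
    simp only [support_nil, List.mem_singleton, exists_eq_left] at h
    exact ⟨_, nil, nil, rfl, h, by simp⟩
  | @cons c u d huc Q ih =>
    by_cases hc : c ∈ K
    · exact ⟨c, nil, cons huc Q, rfl, hc, by simp⟩
    · obtain ⟨x, S, R, rfl, hx, hS⟩ := ih (by simpa [hc] using h)
      exact ⟨x, cons huc S, R, rfl, hx, by simpa [hc] using hS⟩

theorem disjoint_edges_of_forall_mem_support {a b c d x : V} (W : G.Walk a b) (W' : G.Walk c d)
    (h : ∀ w ∈ W.support, w ∈ W'.support → w = x) : W.edges.Disjoint W'.edges := by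
  intro e he he'
  induction e using Sym2.ind with
  | _ p q =>
    exact (W.adj_of_mem_edges he).ne <|
      (h p (W.fst_mem_support_of_mem_edges he) (W'.fst_mem_support_of_mem_edges he')).trans
        (h q (W.snd_mem_support_of_mem_edges he) (W'.snd_mem_support_of_mem_edges he')).symm

end Walk

open Walk

theorem exists_isPath_of_not_isCutVertex {v a b : V} (hv : ¬ IsCutVertex G v) (ha : a ≠ v)
    (hb : b ≠ v) (hab : G.Reachable a b) :
    ∃ W : G.Walk a b, W.IsPath ∧ v ∉ W.support := by
  classical
  obtain ⟨W⟩ : (G.induce {v}ᶜ).Reachable ⟨a, ha⟩ ⟨b, hb⟩ := by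
    by_contra h
    exact hv ⟨_, _, hab, h⟩
  let W' := W.map (Embedding.induce {v}ᶜ).toHom
  refine ⟨W'.bypass, W'.bypass_isPath, fun h => ?_⟩
  have h' := W'.support_bypass_subset_support h
  simp only [W', Walk.support_map, List.mem_map] at h'
  obtain ⟨w, -, hw⟩ := h'
  exact w.2 hw

theorem exists_isCycle_of_adj_of_adj {v a b : V} (ha : G.Adj v a) (hb : G.Adj v b)
    (hab : a ≠ b) (W : G.Walk a b) (hW : v ∉ W.support) :
    ∃ C : G.Walk v v, C.IsCycle ∧ ∀ e ∈ C.edges, e = s(v, a) ∨ e = s(v, b) ∨ e ∈ W.edges := by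
  classical
  have hP : v ∉ W.bypass.support := fun h => hW (W.support_bypass_subset_support h)
  refine ⟨cons ha (W.bypass.concat hb.symm), (cons_isCycle_iff _ _).mpr ⟨?_, ?_⟩, ?_⟩
  · exact W.bypass_isPath.concat hP _
  · simp only [edges_concat, List.concat_eq_append, List.mem_append, List.mem_singleton,
      Sym2.eq_iff, not_or]
    exact ⟨fun h => hP (W.bypass.fst_mem_support_of_mem_edges h), by grind [G.ne_of_adj hb]⟩
  · simp only [edges_cons, edges_concat, List.concat_eq_append, List.mem_cons, List.mem_append,
      List.not_mem_nil, or_false]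
    rintro e (rfl | he | rfl)
    · exact .inl rfl
    · exact .inr (.inr (W.edges_bypass_subset_edges he))
    · exact .inr (.inl (Sym2.eq_swap))

theorem hasTwoEdgeDisjointCycles_of_disjoint_edges {v a b c d : V}
    (hva : G.Adj v a) (hvb : G.Adj v b) (hvc : G.Adj v c) (hvd : G.Adj v d)
    (hab : a ≠ b) (hcd : c ≠ d) (hac : a ≠ c) (had : a ≠ d) (hbc : b ≠ c) (hbd : b ≠ d)
    (A : G.Walk a b) (B : G.Walk c d) (hA : v ∉ A.support) (hB : v ∉ B.support)
    (hAB : A.edges.Disjoint B.edges) :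
    HasTwoEdgeDisjointCycles G := by
  obtain ⟨C₁, hC₁, hE₁⟩ := exists_isCycle_of_adj_of_adj hva hvb hab A hA
  obtain ⟨C₂, hC₂, hE₂⟩ := exists_isCycle_of_adj_of_adj hvc hvd hcd B hB
  refine ⟨v, v, C₁, C₂, hC₁, hC₂, fun e he₁ he₂ => ?_⟩
  rcases hE₁ e he₁ with rfl | rfl | heA <;> rcases hE₂ _ he₂ with h | h | heB
  all_goals first
    | exact hAB heA heB
    | exact hB (B.fst_mem_support_of_mem_edges heB)
    | subst h; exact hA (A.fst_mem_support_of_mem_edges heA)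
    | simp_all

theorem hasTwoEdgeDisjointCycles_of_prefix_suffix {v a b c d x y : V}
    (hva : G.Adj v a) (hvb : G.Adj v b) (hvc : G.Adj v c) (hvd : G.Adj v d)
    (hab : a ≠ b) (hcd : c ≠ d) (hac : a ≠ c) (had : a ≠ d) (hbc : b ≠ c) (hbd : b ≠ d)
    (P₁ : G.Walk a x) (P₂ : G.Walk y b) (S : G.Walk x c) (T : G.Walk y d)
    (hP₁ : v ∉ P₁.support) (hP₂ : v ∉ P₂.support) (hS : v ∉ S.support) (hT : v ∉ T.support)
    (h₁₂ : P₁.edges.Disjoint P₂.edges) (h₁T : P₁.edges.Disjoint T.edges)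
    (hS₂ : S.edges.Disjoint P₂.edges) (hST : S.edges.Disjoint T.edges) :
    HasTwoEdgeDisjointCycles G :=
  hasTwoEdgeDisjointCycles_of_disjoint_edges hva hvc hvb hvd hac hbd hab had hbc.symm hcd
    (P₁.append S) (P₂.reverse.append T) (by simp [hP₁, hS]) (by simp [hP₂, hT]) <| by
      simp only [edges_append, edges_reverse, List.disjoint_append_left,
        List.disjoint_append_right, List.disjoint_reverse_right]
      exact ⟨⟨h₁₂, hS₂⟩, h₁T, hST⟩

theorem hasTwoEdgeDisjointCycles_of_isTrail_of_mem_support {v a b c d x y : V}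
    (hva : G.Adj v a) (hvb : G.Adj v b) (hvc : G.Adj v c) (hvd : G.Adj v d)
    (hab : a ≠ b) (hcd : c ≠ d) (hac : a ≠ c) (had : a ≠ d) (hbc : b ≠ c) (hbd : b ≠ d)
    (P : G.Walk a b) (hP : P.IsTrail) (hPv : v ∉ P.support)
    (hx : x ∈ P.support) (hy : y ∈ P.support) (S : G.Walk x c) (T : G.Walk y d)
    (hS : v ∉ S.support) (hT : v ∉ T.support) (hSP : S.edges.Disjoint P.edges)
    (hTP : T.edges.Disjoint P.edges) (hST : S.edges.Disjoint T.edges) :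
    HasTwoEdgeDisjointCycles G := by
  classical
  have hsplit := P.take_spec hx
  have hdisj : (P.takeUntil x hx).edges.Disjoint (P.dropUntil x hx).edges := by
    apply List.disjoint_of_nodup_append
    rw [← edges_append, hsplit]
    exact hP.edges_nodup
  have hxT : v ∉ (P.takeUntil x hx).support :=
    fun h => hPv (P.support_takeUntil_subset_support hx h)
  have hxD : v ∉ (P.dropUntil x hx).support :=
    fun h => hPv (P.support_dropUntil_subset_support hx h)
  rcases (mem_support_append_iff _ _).mp (hsplit ▸ hy) with hy₁ | hy₂
  · have hsub := (P.takeUntil x hx).edges_takeUntil_subset_edges hy₁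
    refine hasTwoEdgeDisjointCycles_of_prefix_suffix hva hvb hvd hvc
      hab hcd.symm had hac hbd hbc
      ((P.takeUntil x hx).takeUntil y hy₁) (P.dropUntil x hx) T S
      (fun h => hxT ((P.takeUntil x hx).support_takeUntil_subset_support hy₁ h)) hxD hT hS
      (List.disjoint_of_subset_left hsub hdisj) ?_ ?_ hST.symm
    · exact List.disjoint_of_subset_left
        (List.Subset.trans hsub (P.edges_takeUntil_subset_edges hx)) hSP.symm
    · exact List.disjoint_of_subset_right (P.edges_dropUntil_subset_edges hx) hTP
  · have hsub := (P.dropUntil x hx).edges_dropUntil_subset_edges hy₂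
    refine hasTwoEdgeDisjointCycles_of_prefix_suffix hva hvb hvc hvd hab hcd hac had hbc hbd
      (P.takeUntil x hx) ((P.dropUntil x hx).dropUntil y hy₂) S T hxT
      (fun h => hxD ((P.dropUntil x hx).support_dropUntil_subset_support hy₂ h)) hS hT
      (List.disjoint_of_subset_right hsub hdisj) ?_ ?_ hST
    · exact List.disjoint_of_subset_left (P.edges_takeUntil_subset_edges hx) hTP.symm
    · exact List.disjoint_of_subset_right
        (List.Subset.trans hsub (P.edges_dropUntil_subset_edges hx)) hSP

theorem hasTwoEdgeDisjointCycles_of_isTrail_of_isTrail {v a b c d : V}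
    (hva : G.Adj v a) (hvb : G.Adj v b) (hvc : G.Adj v c) (hvd : G.Adj v d)
    (hab : a ≠ b) (hcd : c ≠ d) (hac : a ≠ c) (had : a ≠ d) (hbc : b ≠ c) (hbd : b ≠ d)
    (P : G.Walk a b) (Q : G.Walk c d) (hP : P.IsTrail) (hQ : Q.IsTrail)
    (hPv : v ∉ P.support) (hQv : v ∉ Q.support) :
    HasTwoEdgeDisjointCycles G := by
  by_cases hmeet : ∃ w ∈ Q.support, w ∈ P.support
  · obtain ⟨x, S, R, rfl, hx, hSP⟩ :=
      Q.exists_append_eq_of_exists_mem_support {w | w ∈ P.support} hmeet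
    rw [mem_support_append_iff, not_or] at hQv
    obtain ⟨y, T, R', hR, hy, hTP⟩ :=
      R.reverse.exists_append_eq_of_exists_mem_support {w | w ∈ P.support} ⟨x, by simp, hx⟩
    have hTR : T.edges ⊆ R.edges := fun e he => by
      have h := congrArg edges hR
      rw [edges_append, edges_reverse] at h
      exact List.mem_reverse.mp (h ▸ List.mem_append_left _ he)
    refine hasTwoEdgeDisjointCycles_of_isTrail_of_mem_support hva hvb hvc hvd
      hab hcd hac had hbc hbd P hP hPv hx hy S.reverse T.reverse ?_ ?_ ?_ ?_ ?_
    · simpa using hQv.1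
    · have hvT : v ∉ (T.append R').support := by rw [hR]; simpa using hQv.2
      rw [mem_support_append_iff, not_or] at hvT
      simpa using hvT.1
    · simpa using S.disjoint_edges_of_forall_mem_support P hSP
    · simpa using T.disjoint_edges_of_forall_mem_support P hTP
    · have := List.disjoint_of_nodup_append (edges_append S R ▸ hQ.edges_nodup)
      simpa using List.disjoint_of_subset_right hTR this
  · refine hasTwoEdgeDisjointCycles_of_disjoint_edges hva hvb hvc hvd
      hab hcd hac had hbc hbd P Q hPv hQv ?_
    exact P.disjoint_edges_of_forall_mem_support Q (x := a)
      fun w hwP hwQ => absurd ⟨w, hwQ, hwP⟩ hmeet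

theorem exists_four_adj_of_four_le_degree {v : V} [Fintype (G.neighborSet v)]
    (h : 4 ≤ G.degree v) :
    ∃ a b c d, G.Adj v a ∧ G.Adj v b ∧ G.Adj v c ∧ G.Adj v d ∧
      a ≠ b ∧ a ≠ c ∧ a ≠ d ∧ b ≠ c ∧ b ≠ d ∧ c ≠ d := by
  classical
  rw [← card_neighborFinset_eq_degree] at h
  obtain ⟨s, hs, hcard⟩ := Finset.exists_subset_card_eq h
  obtain ⟨a, t, hat, rfl, ht⟩ := Finset.card_eq_succ.mp hcard
  obtain ⟨b, c, d, hbc, hbd, hcd, rfl⟩ := Finset.card_eq_three.mp ht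
  simp only [Finset.insert_subset_iff, Finset.singleton_subset_iff, mem_neighborFinset] at hs
  simp only [Finset.mem_insert, Finset.mem_singleton, not_or] at hat
  exact ⟨a, b, c, d, hs.1, hs.2.1, hs.2.2.1, hs.2.2.2, hat.1, hat.2.1, hat.2.2, hbc, hbd, hcd⟩

end SimpleGraph

theorem stmt15 {V : Type*} [Fintype V] (G : SimpleGraph V) [DecidableRel G.Adj]
    (v : V) (hv : ¬ IsCutVertex G v) (hd : 4 ≤ G.degree v) :
    HasTwoEdgeDisjointCycles G := by
  obtain ⟨a, b, c, d, hva, hvb, hvc, hvd, hab, hac, had, hbc, hbd, hcd⟩ :=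
    G.exists_four_adj_of_four_le_degree hd
  obtain ⟨P, hP, hPv⟩ := G.exists_isPath_of_not_isCutVertex hv hva.ne' hvb.ne'
    (hva.reachable.symm.trans hvb.reachable)
  obtain ⟨Q, hQ, hQv⟩ := G.exists_isPath_of_not_isCutVertex hv hvc.ne' hvd.ne'
    (hvc.reachable.symm.trans hvd.reachable)
  exact SimpleGraph.hasTwoEdgeDisjointCycles_of_isTrail_of_isTrail hva hvb hvc hvd
    hab hcd hac had hbc hbd P Q hP.isTrail hQ.isTrail hPv hQv
end
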